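/- arXiv:2209.00444 — 11 statements merged into one kernel-verified Lean document; each statement's English description precedes it below -/
import Mathlib

section
/- Let g be a finite-dimensional real Lie algebra equipped with an invariant inner product, let h be a Lie subalgebra of g containing no nonzero ideal of g, and let m be the orthogonal complement of h in g. Suppose m = m_1 ⊕ … ⊕ m_k is an orthogonal direct sum decomposition into subspaces with [h, m_i] ⊆ m_i for each i, and suppose that pr_m([Λ(u), u]) = 0 for every u ∈ m and every metric operator Λ. Then the subspaces g_i := [m_i, m_i] + m_i are ideals of g, [g_i, g_j] = 0 for i ≠ j, g = g_1 ⊕ … ⊕ g_k as a direct sum of ideals, and h = (h ∩ g_1) ⊕ … ⊕ (h ∩ g_k). -/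
/-
For `i ≠ j`, `a ∈ m_i` and `b ∈ m_j`, the operator `Λ = id + P_i` (with `P_i` the orthogonal
projection onto `m_i`) is a metric operator with `Λ (a + b) = 2a + b`, and
`⁅2a + b, a + b⁆ = ⁅a, b⁆`; so the hypothesis says `⁅a, b⁆ ∈ h`. Then `⁅a, ⁅a, b⁆⁆ ∈ m_i ⊥ b`,
and invariance gives `B ⁅a, b⁆ ⁅a, b⁆ = 0`: the `m_i` commute pairwise. As `g = h + Σ m_j`,
this gives `⁅m_i, g⁆ ⊆ g_i`, which makes `g_i` an ideal, and by the Jacobi identity and invariance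
the `g_i` commute and are orthogonal. The orthogonal complement of `Σ g_i` is an ideal orthogonal
to `m`, hence contained in `h`, hence zero. Finally, the `g_i`-components of an element of `h`
are orthogonal to `m`, hence lie in `h`.
-/

namespace LinearMap.BilinForm

variable {K V : Type*} [Field K] [AddCommGroup V] [Module K V] {B : LinearMap.BilinForm K V}

theorem isCompl_orthogonal_of_anisotropic [FiniteDimensional K V] (hsymm : B.IsSymm)
    (hanis : ∀ x, B x x = 0 → x = 0) (W : Submodule K V) : IsCompl W (B.orthogonal W) :=
  (isCompl_orthogonal_iff_disjoint hsymm.isRefl).2 <|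
    Submodule.disjoint_def.2 fun x hx hx' => hanis x (hx' x hx)

theorem apply_eq_zero_of_mem_iSup {ι : Sort*} {U : ι → Submodule K V} {x y : V}
    (hx : ∀ i, ∀ z ∈ U i, B x z = 0) (hy : y ∈ ⨆ i, U i) : B x y = 0 :=
  (iSup_le fun i z hz => LinearMap.mem_ker.2 (hx i z hz) : ⨆ i, U i ≤ LinearMap.ker (B x)) hy

theorem mem_of_forall_apply_eq_zero (hanis : ∀ x, B x x = 0 → x = 0) {H M : Submodule K V}
    (hHM : H ⊔ M = ⊤) (horth : ∀ y ∈ H, ∀ z ∈ M, B y z = 0) {x : V}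
    (hx : ∀ z ∈ M, B x z = 0) : x ∈ H := by
  obtain ⟨y, hy, z, hz, rfl⟩ := Submodule.mem_sup.1 (hHM ▸ Submodule.mem_top : x ∈ H ⊔ M)
  have hz0 : z = 0 := hanis z <| by simpa [horth y hy z hz] using hx z hz
  simpa [hz0] using hy

variable {ι : Type*} [Fintype ι] {U : ι → Submodule K V}

theorem apply_sum_of_pairwise_orthogonal
    (horth : ∀ i j, i ≠ j → ∀ x ∈ U i, ∀ y ∈ U j, B x y = 0) {c : ι → V} (hc : ∀ i, c i ∈ U i)
    {j : ι} {y : V} (hy : y ∈ U j) : B (∑ i, c i) y = B (c j) y := by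
  classical
  rw [map_sum, LinearMap.sum_apply]
  exact Finset.sum_eq_single j (fun i _ hij => horth i j hij _ (hc i) y hy) (by simp)

theorem apply_eq_zero_of_apply_sum_eq_zero
    (horth : ∀ i j, i ≠ j → ∀ x ∈ U i, ∀ y ∈ U j, B x y = 0) {c : ι → V} (hc : ∀ i, c i ∈ U i)
    {j : ι} {y : V} (hy : y ∈ U j) (hsum : B (∑ i, c i) y = 0) (i : ι) : B (c i) y = 0 := by
  rcases eq_or_ne i j with rfl | hij
  · rwa [← apply_sum_of_pairwise_orthogonal horth hc hy]
  · exact horth i j hij _ (hc i) y hy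

theorem eq_of_sum_eq_of_pairwise_orthogonal
    (horth : ∀ i j, i ≠ j → ∀ x ∈ U i, ∀ y ∈ U j, B x y = 0) (hanis : ∀ x, B x x = 0 → x = 0)
    {c c' : ι → V} (hc : ∀ i, c i ∈ U i) (hc' : ∀ i, c' i ∈ U i)
    (hsum : ∑ i, c i = ∑ i, c' i) : c = c' := by
  funext j
  have hd : ∀ i, c i - c' i ∈ U i := fun i => sub_mem (hc i) (hc' i)
  rw [← sub_eq_zero]
  apply hanis
  rw [← apply_sum_of_pairwise_orthogonal horth hd (hd j), Finset.sum_sub_distrib, hsum,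
    sub_self, map_zero, LinearMap.zero_apply]

theorem existsUnique_sum_eq_of_pairwise_orthogonal
    (horth : ∀ i j, i ≠ j → ∀ x ∈ U i, ∀ y ∈ U j, B x y = 0) (hanis : ∀ x, B x x = 0 → x = 0)
    (htop : ⨆ i, U i = ⊤) (x : V) : ∃! c : ι → V, (∀ i, c i ∈ U i) ∧ ∑ i, c i = x := by
  classical
  obtain ⟨f, hf, hfx⟩ :=
    (Submodule.mem_iSup_iff_exists_finsupp U x).1 (htop ▸ Submodule.mem_top)
  rw [Finsupp.sum_fintype _ _ fun _ => rfl] at hfx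
  exact ⟨f, ⟨hf, hfx⟩, fun c ⟨hc, hcx⟩ =>
    eq_of_sum_eq_of_pairwise_orthogonal horth hanis hc hf (hcx.trans hfx.symm)⟩

theorem mem_of_sum_mem_of_pairwise_orthogonal
    (horth : ∀ i j, i ≠ j → ∀ x ∈ U i, ∀ y ∈ U j, B x y = 0) (hanis : ∀ x, B x x = 0 → x = 0)
    {H : Submodule K V} {M : ι → Submodule K V} (hHM : H ⊔ ⨆ i, M i = ⊤)
    (horthHM : ∀ y ∈ H, ∀ z ∈ ⨆ i, M i, B y z = 0) (hMU : ∀ i, M i ≤ U i) {c : ι → V}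
    (hc : ∀ i, c i ∈ U i) (hsum : ∑ i, c i ∈ H) (i : ι) : c i ∈ H :=
  mem_of_forall_apply_eq_zero hanis hHM horthHM fun _ hz =>
    apply_eq_zero_of_mem_iSup (fun j y hy => apply_eq_zero_of_apply_sum_eq_zero horth hc
      (hMU j hy) (horthHM _ hsum y (Submodule.mem_iSup_of_mem j hy)) i) hz

end LinearMap.BilinForm

namespace Submodule

variable {R L : Type*} [CommRing R] [LieRing L] [LieAlgebra R L] {X Y N : Submodule R L}

/-- `[X, X] + X`; the paper's `g_i` is `(m_i).bracketSup`. -/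
def bracketSup (X : Submodule R L) : Submodule R L :=
  span R {x | ∃ a ∈ X, ∃ b ∈ X, ⁅a, b⁆ = x} ⊔ X

theorem le_bracketSup : X ≤ X.bracketSup := le_sup_right

theorem lie_mem_bracketSup {a b : L} (ha : a ∈ X) (hb : b ∈ X) : ⁅a, b⁆ ∈ X.bracketSup :=
  mem_sup_left (subset_span ⟨a, ha, b, hb, rfl⟩)

theorem bracketSup_le (hlie : ∀ a ∈ X, ∀ b ∈ X, ⁅a, b⁆ ∈ N) (hX : X ≤ N) : X.bracketSup ≤ N :=
  sup_le (span_le.2 fun _ ⟨a, ha, b, hb, hab⟩ => hab ▸ hlie a ha b hb) hX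

theorem lie_eq_zero_of_mem_bracketSup_right (hXY : ∀ a ∈ X, ∀ b ∈ Y, ⁅a, b⁆ = 0) {a b : L}
    (ha : a ∈ X) (hb : b ∈ Y.bracketSup) : ⁅a, b⁆ = 0 := by
  refine (bracketSup_le (N := LinearMap.ker (LieAlgebra.ad R L a)) (fun c hc d hd => ?_)
    fun b hb => hXY a ha b hb) hb
  simp [leibniz_lie, hXY a ha c hc, hXY a ha d hd]

theorem lie_eq_zero_of_mem_bracketSup (hXY : ∀ a ∈ X, ∀ b ∈ Y, ⁅a, b⁆ = 0) {a b : L}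
    (ha : a ∈ X.bracketSup) (hb : b ∈ Y.bracketSup) : ⁅a, b⁆ = 0 := by
  have hYX : ∀ b ∈ Y.bracketSup, ∀ a ∈ X, ⁅b, a⁆ = 0 := fun b hb a ha => by
    rw [← lie_skew, lie_eq_zero_of_mem_bracketSup_right hXY ha hb, neg_zero]
  rw [← lie_skew, lie_eq_zero_of_mem_bracketSup_right hYX hb ha, neg_zero]

theorem lie_mem_bracketSup_of_forall (hX : ∀ x ∈ X, ∀ y, ⁅x, y⁆ ∈ X.bracketSup) (z : L)
    {y : L} (hy : y ∈ X.bracketSup) : ⁅z, y⁆ ∈ X.bracketSup := by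
  have hzX : ∀ x ∈ X, ⁅z, x⁆ ∈ X.bracketSup := fun x hx => by
    rw [← lie_skew]
    exact neg_mem (hX x hx z)
  refine (bracketSup_le (N := X.bracketSup.comap (LieAlgebra.ad R L z)) (fun a ha b hb => ?_)
    hzX) hy
  rw [mem_comap, LieAlgebra.ad_apply, leibniz_lie, ← lie_skew ⁅z, a⁆]
  exact add_mem (neg_mem (hX b hb _)) (hX a ha _)

theorem lie_mem_bracketSup_of_mem {ι : Type*} {H : Submodule R L} {U : ι → Submodule R L}
    (hspan : H ⊔ ⨆ i, U i = ⊤) (hHU : ∀ i, ∀ v ∈ H, ∀ x ∈ U i, ⁅v, x⁆ ∈ U i)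
    (hcomm : ∀ i j, i ≠ j → ∀ a ∈ U i, ∀ b ∈ U j, ⁅a, b⁆ = 0) {i : ι} {x : L} (hx : x ∈ U i)
    (y : L) : ⁅x, y⁆ ∈ (U i).bracketSup := by
  obtain ⟨v, hv, z, hz, rfl⟩ := mem_sup.1 (hspan ▸ mem_top : y ∈ H ⊔ ⨆ i, U i)
  have hU : ⨆ j, U j ≤ (U i).bracketSup.comap (LieAlgebra.ad R L x) := iSup_le fun j z hz => by
    rcases eq_or_ne i j with rfl | hij
    · exact lie_mem_bracketSup hx hz
    · simp [hcomm i j hij x hx z hz]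
  rw [lie_add, ← lie_skew]
  exact add_mem (neg_mem (le_bracketSup (hHU i v hv x hx))) (hU hz)

end Submodule

namespace LinearMap.BilinForm

variable {K L : Type*} [Field K] [LieRing L] [LieAlgebra K L] {B : LinearMap.BilinForm K L}

section Projection

variable {W : Submodule K L} (hW : IsCompl W (B.orthogonal W))

theorem apply_projection_left_eq_right (hsymm : B.IsSymm) (x y : L) :
    B (W.projection _ hW x) y = B x (W.projection _ hW y) := by
  have hx := Submodule.sub_projection_mem hW x _ (Submodule.projection_apply_mem hW y)
  have hy := Submodule.sub_projection_mem hW y _ (Submodule.projection_apply_mem hW x)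
  rw [hsymm.eq, map_sub, LinearMap.sub_apply, sub_eq_zero] at hx
  rw [map_sub, sub_eq_zero] at hy
  rw [hy, hx]

theorem apply_projection_self (x : L) :
    B (W.projection _ hW x) x = B (W.projection _ hW x) (W.projection _ hW x) := by
  have hx := Submodule.sub_projection_mem hW x _ (Submodule.projection_apply_mem hW x)
  rwa [map_sub, sub_eq_zero] at hx

theorem projection_lie (hinv : B.lieInvariant L) {v : L} (hv : ∀ w ∈ W, ⁅v, w⁆ ∈ W) (x : L) :
    W.projection _ hW ⁅v, x⁆ = ⁅v, W.projection _ hW x⁆ := by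
  have horth : ⁅v, x - W.projection _ hW x⁆ ∈ B.orthogonal W := fun w hw => by
    rw [← neg_eq_zero, ← hinv]
    exact Submodule.sub_projection_mem hW x _ (hv w hw)
  rw [← sub_add_cancel x (W.projection _ hW x), lie_add, map_add,
    (Submodule.projection_apply_eq_zero_iff hW).2 horth, zero_add, sub_add_cancel,
    Submodule.projection_apply_of_mem_left hW (hv _ (Submodule.projection_apply_mem hW x))]

end Projection

theorem lie_eq_zero_of_lie_lie_mem (hsymm : B.IsSymm) (hanis : ∀ x, B x x = 0 → x = 0)
    (hinv : B.lieInvariant L) {W W' : Submodule K L} (horth : ∀ x ∈ W, ∀ y ∈ W', B x y = 0)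
    {a b : L} (hb : b ∈ W') (hab : ⁅a, ⁅a, b⁆⁆ ∈ W) : ⁅a, b⁆ = 0 :=
  hanis _ <| by rw [hinv, hsymm.eq, horth _ hab b hb, neg_zero]

theorem apply_eq_zero_of_mem_bracketSup_right (hinv : B.lieInvariant L)
    {X Y : Submodule K L} (hXY : ∀ a ∈ X, ∀ b ∈ Y, ⁅a, b⁆ = 0)
    (horth : ∀ a ∈ X, ∀ b ∈ Y, B a b = 0) {a b : L} (ha : a ∈ X) (hb : b ∈ Y.bracketSup) :
    B a b = 0 := by
  refine (Submodule.bracketSup_le (N := LinearMap.ker (B a)) (fun c hc d hd => ?_)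
    fun b hb => horth a ha b hb) hb
  rw [LinearMap.mem_ker, ← neg_eq_zero, ← hinv, ← lie_skew, hXY a ha c hc, neg_zero, map_zero,
    LinearMap.zero_apply]

theorem apply_eq_zero_of_mem_bracketSup (hsymm : B.IsSymm) (hinv : B.lieInvariant L)
    {X Y : Submodule K L} (hXY : ∀ a ∈ X, ∀ b ∈ Y, ⁅a, b⁆ = 0)
    (horth : ∀ a ∈ X, ∀ b ∈ Y, B a b = 0) {a b : L} (ha : a ∈ X.bracketSup)
    (hb : b ∈ Y.bracketSup) : B a b = 0 := by
  rw [hsymm.eq]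
  refine apply_eq_zero_of_mem_bracketSup_right hinv (fun b' hb' a' ha' => ?_)
    (fun b' hb' a' ha' => ?_) hb ha
  · rw [← lie_skew, Submodule.lie_eq_zero_of_mem_bracketSup hXY
      (Submodule.le_bracketSup ha') hb', neg_zero]
  · rw [hsymm.eq]
    exact apply_eq_zero_of_mem_bracketSup_right hinv hXY horth ha' hb'

theorem lieIdeal_eq_top_of_orthogonal [FiniteDimensional K L] (hsymm : B.IsSymm)
    (hanis : ∀ x, B x x = 0 → x = 0) (hinv : B.lieInvariant L) {I : LieIdeal K L}
    (hI : ∀ J : LieIdeal K L, (∀ x ∈ I, ∀ y ∈ J, B x y = 0) → J = ⊥) : I = ⊤ := by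
  have hJ := hI (LieAlgebra.InvariantForm.orthogonal B hinv I) fun x hx y hy =>
    (LieAlgebra.InvariantForm.mem_orthogonal B hinv I y).1 hy x hx
  have hcompl := isCompl_orthogonal_of_anisotropic hsymm hanis I.toSubmodule
  rw [← LieAlgebra.InvariantForm.orthogonal_toSubmodule B hinv, hJ,
    LieSubmodule.bot_toSubmodule] at hcompl
  exact (LieSubmodule.toSubmodule_eq_top I).1 (eq_top_of_isCompl_bot hcompl)

theorem lieIdeal_eq_top_of_le [FiniteDimensional K L] (hsymm : B.IsSymm)
    (hanis : ∀ x, B x x = 0 → x = 0) (hinv : B.lieInvariant L) {H M : Submodule K L}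
    (hHM : H ⊔ M = ⊤) (horth : ∀ y ∈ H, ∀ z ∈ M, B y z = 0)
    (hH : ∀ J : LieIdeal K L, (∀ x ∈ J, x ∈ H) → J = ⊥) {I : LieIdeal K L}
    (hMI : M ≤ I.toSubmodule) : I = ⊤ :=
  lieIdeal_eq_top_of_orthogonal hsymm hanis hinv fun J hJ =>
    hH J fun y hy => mem_of_forall_apply_eq_zero hanis hHM horth fun z hz => by
      rw [hsymm.eq]
      exact hJ z (hMI hz) y hy

end LinearMap.BilinForm

structure IsMetricOperator {g : Type*} [LieRing g] [LieAlgebra ℝ g]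
    (B : LinearMap.BilinForm ℝ g) (h : LieSubalgebra ℝ g) (m : Submodule ℝ g)
    (Λ : m →ₗ[ℝ] m) : Prop where
  symm : ∀ u v : m, B (Λ u : g) (v : g) = B (u : g) (Λ v : g)
  pos : ∀ u : m, u ≠ 0 → 0 < B (Λ u : g) (u : g)
  lie_comm : ∀ v ∈ h, ∀ w : m, ∀ hvw : ⁅v, (w : g)⁆ ∈ m,
    ((Λ ⟨⁅v, (w : g)⁆, hvw⟩ : m) : g) = ⁅v, (Λ w : g)⁆

section MetricOperator

open LinearMap.BilinForm

variable {g : Type*} [LieRing g] [LieAlgebra ℝ g] {B : LinearMap.BilinForm ℝ g}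
  {h : LieSubalgebra ℝ g} {m : Submodule ℝ g}

theorem exists_isMetricOperator_id_add_projection (hsymm : B.IsSymm)
    (hpos : ∀ x, x ≠ 0 → 0 < B x x) (hinv : B.lieInvariant g) {W : Submodule ℝ g}
    (hW : IsCompl W (B.orthogonal W)) (hWm : W ≤ m) (hhW : ∀ v ∈ h, ∀ w ∈ W, ⁅v, w⁆ ∈ W) :
    ∃ Λ : m →ₗ[ℝ] m, IsMetricOperator B h m Λ ∧
      ∀ u : m, (Λ u : g) = u + W.projection _ hW u := by
  refine ⟨(LinearMap.id + W.projection _ hW).restrict fun x hx =>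
    add_mem hx (hWm (Submodule.projection_apply_mem hW x)), ⟨fun u v => ?_, fun u hu => ?_,
    fun v hv w hvw => ?_⟩, fun u => rfl⟩
  · simp [apply_projection_left_eq_right hW hsymm]
  · have hPu : 0 ≤ B (W.projection _ hW u) (W.projection _ hW u) := by
      rcases eq_or_ne (W.projection _ hW u) 0 with hPu | hPu
      · simp [hPu]
      · exact (hpos _ hPu).le
    have hu' : 0 < B u u := hpos _ (by simpa using hu)
    simp only [LinearMap.restrict_apply, LinearMap.add_apply, LinearMap.id_apply, map_add,
      apply_projection_self hW]
    linarith
  · simp [projection_lie hW hinv (hhW v hv)]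

theorem lie_eq_zero_of_forall_isMetricOperator [FiniteDimensional ℝ g] (hsymm : B.IsSymm)
    (hpos : ∀ x, x ≠ 0 → 0 < B x x) (hinv : B.lieInvariant g) {prh prm : g →ₗ[ℝ] g}
    (hprh : ∀ x, prh x ∈ h) (hpr : ∀ x, prh x + prm x = x)
    (hequi : ∀ Λ : m →ₗ[ℝ] m, IsMetricOperator B h m Λ → ∀ u : m, prm ⁅(Λ u : g), u⁆ = 0)
    {W W' : Submodule ℝ g} (hWm : W ≤ m) (hW'm : W' ≤ m) (hhW : ∀ v ∈ h, ∀ w ∈ W, ⁅v, w⁆ ∈ W)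
    (horth : ∀ x ∈ W, ∀ y ∈ W', B x y = 0) {a b : g} (ha : a ∈ W) (hb : b ∈ W') :
    ⁅a, b⁆ = 0 := by
  have hanis : ∀ x, B x x = 0 → x = 0 := fun x hx => by_contra fun hx' => (hpos x hx').ne' hx
  have hW := isCompl_orthogonal_of_anisotropic hsymm hanis W
  obtain ⟨Λ, hΛ, hΛu⟩ := exists_isMetricOperator_id_add_projection hsymm hpos hinv hW hWm hhW
  have hPa := Submodule.projection_apply_of_mem_left hW ha
  have hPb := (Submodule.projection_apply_eq_zero_iff hW).2 fun x hx => horth x hx b hb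
  -- `Λ (a + b) = 2a + b` and `⁅2a + b, a + b⁆ = ⁅a, b⁆`
  have hprm : prm ⁅a, b⁆ = 0 := by
    have := hequi Λ hΛ ⟨a + b, add_mem (hWm ha) (hW'm hb)⟩
    rw [hΛu, map_add, hPa, hPb] at this
    convert this using 2
    simp only [add_zero, add_lie, lie_add, lie_self]
    rw [← lie_skew b a]
    abel
  have hab : ⁅a, b⁆ ∈ h := by
    rw [← hpr ⁅a, b⁆, hprm, add_zero]
    exact hprh _
  refine lie_eq_zero_of_lie_lie_mem hsymm hanis hinv horth hb ?_
  rw [← lie_skew]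
  exact neg_mem (hhW _ hab a ha)

end MetricOperator

open LinearMap.BilinForm Submodule in
theorem statement_0
    {g : Type*} [LieRing g] [LieAlgebra ℝ g] [FiniteDimensional ℝ g]
    (B : g →ₗ[ℝ] g →ₗ[ℝ] ℝ)
    (hBsymm : ∀ x y : g, B x y = B y x)
    (hBpos : ∀ x : g, x ≠ 0 → 0 < B x x)
    (hBinv : ∀ x y z : g, B ⁅z, x⁆ y + B x ⁅z, y⁆ = 0)
    (h : LieSubalgebra ℝ g)
    (hnoideal : ∀ I : LieIdeal ℝ g, (∀ x ∈ I, x ∈ h) → I = ⊥)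
    (m : Submodule ℝ g)
    (hm : ∀ x : g, x ∈ m ↔ ∀ y ∈ h, B x y = 0)
    (prh prm : g →ₗ[ℝ] g)
    (hprh : ∀ x : g, prh x ∈ h)
    (hprm : ∀ x : g, prm x ∈ m)
    (hpr : ∀ x : g, prh x + prm x = x)
    (k : ℕ) (mi : Fin k → Submodule ℝ g)
    (hsup : ⨆ i, mi i = m)
    (horth : ∀ i j, i ≠ j → ∀ x ∈ mi i, ∀ y ∈ mi j, B x y = 0)
    (hhmi : ∀ i, ∀ v ∈ h, ∀ x ∈ mi i, ⁅v, x⁆ ∈ mi i)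
    (hequi : ∀ Λ : m →ₗ[ℝ] m,
      (∀ u v : m, B (Λ u : g) (v : g) = B (u : g) (Λ v : g)) →
      (∀ u : m, u ≠ 0 → 0 < B (Λ u : g) (u : g)) →
      (∀ v ∈ h, ∀ w : m, ∀ hvw : ⁅v, (w : g)⁆ ∈ m,
        ((Λ ⟨⁅v, (w : g)⁆, hvw⟩ : m) : g) = ⁅v, (Λ w : g)⁆) →
      ∀ u : m, prm ⁅(Λ u : g), (u : g)⁆ = 0)
    (gi : Fin k → Submodule ℝ g)
    (hgi : ∀ i, gi i =
      Submodule.span ℝ {x : g | ∃ a ∈ mi i, ∃ b ∈ mi i, ⁅a, b⁆ = x} ⊔ mi i) :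
    (∀ i, ∀ x : g, ∀ y ∈ gi i, ⁅x, y⁆ ∈ gi i) ∧
    (∀ i j, i ≠ j → ∀ x ∈ gi i, ∀ y ∈ gi j, ⁅x, y⁆ = 0) ∧
    (∀ x : g, ∃! c : Fin k → g, (∀ i, c i ∈ gi i) ∧ ∑ i, c i = x) ∧
    (∀ x ∈ h, ∃! c : Fin k → g,
      (∀ i, c i ∈ h ∧ c i ∈ gi i) ∧ ∑ i, c i = x) := by
  obtain rfl : gi = fun i => (mi i).bracketSup := funext hgi
  have hsymm : LinearMap.BilinForm.IsSymm B := ⟨hBsymm⟩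
  have hanis : ∀ x, B x x = 0 → x = 0 := fun x hx => by_contra fun hx' => (hBpos x hx').ne' hx
  have hinv : LinearMap.BilinForm.lieInvariant g B := fun x y z =>
    eq_neg_of_add_eq_zero_left (hBinv y z x)
  have hspan : h.toSubmodule ⊔ ⨆ i, mi i = ⊤ := eq_top_iff.2 fun x _ =>
    hpr x ▸ add_mem_sup (hprh x) (hsup ▸ hprm x)
  have hhm : ∀ y ∈ h.toSubmodule, ∀ z ∈ ⨆ i, mi i, B y z = 0 := fun y hy z hz => by
    rw [hBsymm]
    exact (hm z).1 (hsup ▸ hz) y hy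
  have hmi : ∀ i, mi i ≤ m := fun i => hsup ▸ le_iSup mi i
  have hcomm : ∀ i j, i ≠ j → ∀ a ∈ mi i, ∀ b ∈ mi j, ⁅a, b⁆ = 0 := fun i j hij a ha b hb =>
    lie_eq_zero_of_forall_isMetricOperator hsymm hBpos hinv hprh hpr
      (fun Λ hΛ => hequi Λ hΛ.symm hΛ.pos hΛ.lie_comm) (hmi i) (hmi j) (hhmi i)
      (horth i j hij) ha hb
  have hideal : ∀ i x, ∀ y ∈ (mi i).bracketSup, ⁅x, y⁆ ∈ (mi i).bracketSup := fun i =>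
    lie_mem_bracketSup_of_forall fun x hx => lie_mem_bracketSup_of_mem hspan hhmi hcomm hx
  have hgorth : ∀ i j, i ≠ j → ∀ x ∈ (mi i).bracketSup, ∀ y ∈ (mi j).bracketSup, B x y = 0 :=
    fun i j hij _ hx _ hy =>
      apply_eq_zero_of_mem_bracketSup hsymm hinv (hcomm i j hij) (horth i j hij) hx hy
  have htop : ⨆ i, (mi i).bracketSup = ⊤ := by
    let G : Fin k → LieIdeal ℝ g := fun i => { (mi i).bracketSup with lie_mem := hideal i _ _ }
    refine LieSubmodule.iSup_toSubmodule_eq_top (N := G) |>.2 <|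
      lieIdeal_eq_top_of_le hsymm hanis hinv hspan hhm hnoideal ?_
    rw [LieSubmodule.iSup_toSubmodule]
    exact iSup_mono fun i => le_bracketSup
  have hdecomp := existsUnique_sum_eq_of_pairwise_orthogonal hgorth hanis htop
  refine ⟨hideal, fun i j hij x hx y hy => lie_eq_zero_of_mem_bracketSup (hcomm i j hij) hx hy,
    hdecomp, fun x hx => ?_⟩
  obtain ⟨c, ⟨hc, rfl⟩, huniq⟩ := hdecomp x
  exact ⟨c, ⟨fun i => ⟨mem_of_sum_mem_of_pairwise_orthogonal hgorth hanis hspan hhm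
    (fun i => le_bracketSup) hc hx i, hc i⟩, rfl⟩,
    fun c' hc' => huniq c' ⟨fun i => (hc'.1 i).2, hc'.2⟩⟩
end

section
/- Let g be a finite-dimensional real Lie algebra with an invariant inner product, h a Lie subalgebra, m the orthogonal complement of h in g, and m = m_1 ⊕ … ⊕ m_k an orthogonal direct sum decomposition into subspaces with [h, m_i] ⊆ m_i for each i. Suppose that pr_m([Λ(u), u]) = 0 for every u ∈ m and every metric operator Λ. Then [m_i, m_j] ⊆ h whenever i ≠ j. -/
/-! Take `Λ = id + P` on `m`, where `P` is the orthogonal projection onto `mᵢ`. It is symmetric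
and positive definite, and it commutes with `ad v` for `v ∈ h` because `ad v` is skew and
preserves `mᵢ`, hence also `mᵢᗮ`. For `x ∈ mᵢ`, `y ∈ mⱼ` we get `Λ (x + y) = 2x + y`, so
`⁅Λ (x + y), x + y⁆ = ⁅x, y⁆`; the hypothesis then says `⁅x, y⁆` has no `m`-component. -/

open scoped RealInnerProductSpace

noncomputable abbrev innerProductCoreOfPosDef {V : Type*} [AddCommGroup V] [Module ℝ V]
    (B : V →ₗ[ℝ] V →ₗ[ℝ] ℝ) (hsymm : ∀ x y, B x y = B y x) (hpos : ∀ x, x ≠ 0 → 0 < B x x) :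
    InnerProductSpace.Core ℝ V where
  inner x y := B x y
  conj_inner_symm x y := by simpa using hsymm y x
  re_inner_nonneg x := by
    obtain rfl | hx := eq_or_ne x 0
    · simp
    · simpa using (hpos x hx).le
  add_left x y z := by simp
  smul_left x y r := by simp
  definite x hx := by
    by_contra hne
    exact (hpos x hne).ne' (by simpa using hx)

namespace Submodule

variable {E : Type*} [NormedAddCommGroup E] [InnerProductSpace ℝ E]
  (K : Submodule ℝ E) [K.HasOrthogonalProjection]

theorem starProjection_map_of_skew_of_mapsTo (D : E →ₗ[ℝ] E)
    (hD : ∀ a b, ⟪D a, b⟫ = -⟪a, D b⟫) (hK : ∀ x ∈ K, D x ∈ K) (x : E) :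
    K.starProjection (D x) = D (K.starProjection x) := by
  refine K.eq_starProjection_of_mem_of_inner_eq_zero (hK _ (K.starProjection_apply_mem x))
    fun z hz => ?_
  rw [← map_sub, hD, K.starProjection_inner_eq_zero x _ (hK z hz), neg_zero]

theorem inner_add_starProjection_left_eq_right (u v : E) :
    ⟪u + K.starProjection u, v⟫ = ⟪u, v + K.starProjection v⟫ := by
  rw [inner_add_left, inner_add_right, K.inner_starProjection_left_eq_right]

theorem inner_add_starProjection_self_pos {u : E} (hu : u ≠ 0) :
    0 < ⟪u + K.starProjection u, u⟫ := by
  have hP : 0 ≤ ⟪K.starProjection u, u⟫ := by simpa using K.re_inner_starProjection_nonneg u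
  rw [inner_add_left]
  exact add_pos_of_pos_of_nonneg (real_inner_self_pos.mpr hu) hP

end Submodule

theorem lie_add_add_self_add {L : Type*} [LieRing L] (x y : L) :
    ⁅x + y + x, x + y⁆ = ⁅x, y⁆ := by
  simp only [add_lie, lie_add, lie_self, ← lie_skew y x]
  abel

theorem statement_1_general
    {g : Type*} [LieRing g] [LieAlgebra ℝ g] [FiniteDimensional ℝ g]
    (B : g →ₗ[ℝ] g →ₗ[ℝ] ℝ)
    (hBsymm : ∀ x y : g, B x y = B y x)
    (hBpos : ∀ x : g, x ≠ 0 → 0 < B x x)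
    (hBinv : ∀ x y z : g, B ⁅z, x⁆ y + B x ⁅z, y⁆ = 0)
    (h : LieSubalgebra ℝ g)
    (m : Submodule ℝ g)
    (prh prm : g →ₗ[ℝ] g)
    (hprh : ∀ x : g, prh x ∈ h)
    (hpr : ∀ x : g, prh x + prm x = x)
    (k : ℕ) (mi : Fin k → Submodule ℝ g)
    (hsup : ⨆ i, mi i = m)
    (horth : ∀ i j, i ≠ j → ∀ x ∈ mi i, ∀ y ∈ mi j, B x y = 0)
    (hhmi : ∀ i, ∀ v ∈ h, ∀ x ∈ mi i, ⁅v, x⁆ ∈ mi i)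
    (hequi : ∀ Λ : m →ₗ[ℝ] m,
      (∀ u v : m, B (Λ u : g) (v : g) = B (u : g) (Λ v : g)) →
      (∀ u : m, u ≠ 0 → 0 < B (Λ u : g) (u : g)) →
      (∀ v ∈ h, ∀ w : m, ∀ hvw : ⁅v, (w : g)⁆ ∈ m,
        ((Λ ⟨⁅v, (w : g)⁆, hvw⟩ : m) : g) = ⁅v, (Λ w : g)⁆) →
      ∀ u : m, prm ⁅(Λ u : g), (u : g)⁆ = 0) :
    ∀ i j, i ≠ j → ∀ x ∈ mi i, ∀ y ∈ mi j, ⁅x, y⁆ ∈ h := by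
  intro i j hij x hx y hy
  have hmi_le (l : Fin k) : mi l ≤ m := hsup ▸ le_iSup mi l
  let c := innerProductCoreOfPosDef B hBsymm hBpos
  let _ : NormedAddCommGroup g := c.toNormedAddCommGroup
  let _ : InnerProductSpace ℝ g := .ofCore c.toCore
  have had_skew (v a b : g) : ⟪LieAlgebra.ad ℝ g v a, b⟫ = -⟪a, LieAlgebra.ad ℝ g v b⟫ :=
    eq_neg_of_add_eq_zero_left (hBinv a b v)
  let P := (mi i).starProjection
  let Λ : m →ₗ[ℝ] m := (LinearMap.id + (P : g →ₗ[ℝ] g)).restrict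
    fun u hu => m.add_mem hu (hmi_le i ((mi i).starProjection_apply_mem u))
  have hPx : P x = x := (mi i).starProjection_eq_self_iff.mpr hx
  have hPy : P y = 0 := (mi i).starProjection_apply_eq_zero_iff.mpr
    fun z hz => (hBsymm z y).trans (horth j i hij.symm y hy z hz)
  let u : m := ⟨x + y, m.add_mem (hmi_le i hx) (hmi_le j hy)⟩
  have hΛu : (Λ u : g) = x + y + x := by simp [Λ, u, hPx, hPy]
  have hprm_zero : prm ⁅x, y⁆ = 0 := by
    rw [← lie_add_add_self_add, ← hΛu]
    refine hequi Λ (fun u v => (mi i).inner_add_starProjection_left_eq_right u v)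
      (fun u hu => (mi i).inner_add_starProjection_self_pos (by simpa using hu))
      (fun v hv w _ => ?_) u
    simp only [Λ, LinearMap.coe_restrict_apply, LinearMap.add_apply, LinearMap.id_apply,
      ContinuousLinearMap.coe_coe, lie_add]
    exact congrArg _ <|
      (mi i).starProjection_map_of_skew_of_mapsTo (LieAlgebra.ad ℝ g v) (had_skew v) (hhmi i v hv) w
  rw [← hpr ⁅x, y⁆, hprm_zero, add_zero]
  exact hprh _

theorem statement_1
    {g : Type*} [LieRing g] [LieAlgebra ℝ g] [FiniteDimensional ℝ g]
    (B : g →ₗ[ℝ] g →ₗ[ℝ] ℝ)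
    (hBsymm : ∀ x y : g, B x y = B y x)
    (hBpos : ∀ x : g, x ≠ 0 → 0 < B x x)
    (hBinv : ∀ x y z : g, B ⁅z, x⁆ y + B x ⁅z, y⁆ = 0)
    (h : LieSubalgebra ℝ g)
    (m : Submodule ℝ g)
    (hm : ∀ x : g, x ∈ m ↔ ∀ y ∈ h, B x y = 0)
    (prh prm : g →ₗ[ℝ] g)
    (hprh : ∀ x : g, prh x ∈ h)
    (hprm : ∀ x : g, prm x ∈ m)
    (hpr : ∀ x : g, prh x + prm x = x)
    (k : ℕ) (mi : Fin k → Submodule ℝ g)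
    (hsup : ⨆ i, mi i = m)
    (horth : ∀ i j, i ≠ j → ∀ x ∈ mi i, ∀ y ∈ mi j, B x y = 0)
    (hhmi : ∀ i, ∀ v ∈ h, ∀ x ∈ mi i, ⁅v, x⁆ ∈ mi i)
    (hequi : ∀ Λ : m →ₗ[ℝ] m,
      (∀ u v : m, B (Λ u : g) (v : g) = B (u : g) (Λ v : g)) →
      (∀ u : m, u ≠ 0 → 0 < B (Λ u : g) (u : g)) →
      (∀ v ∈ h, ∀ w : m, ∀ hvw : ⁅v, (w : g)⁆ ∈ m,
        ((Λ ⟨⁅v, (w : g)⁆, hvw⟩ : m) : g) = ⁅v, (Λ w : g)⁆) →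
      ∀ u : m, prm ⁅(Λ u : g), (u : g)⁆ = 0) :
    ∀ i j, i ≠ j → ∀ x ∈ mi i, ∀ y ∈ mi j, ⁅x, y⁆ ∈ h :=
  statement_1_general B hBsymm hBpos hBinv h m prh prm hprh hpr k mi hsup horth hhmi hequi
end

section
/- Let g be a finite-dimensional real Lie algebra with an invariant inner product, h a Lie subalgebra, m the orthogonal complement of h in g, and m = m_1 ⊕ … ⊕ m_k an orthogonal direct sum decomposition. Suppose [m_i, m_j] ⊆ h whenever i ≠ j. Then [m_i, m_i] ⊆ h + m_i for each i. -/
/-! Split `m = mᵢ ⊕ N` with `N = ⨁_{j ≠ i} m_j` and write `⁅x, y⁆ = a + u + n` with `a ∈ h`,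
`u ∈ mᵢ`, `n ∈ N`. For `v ∈ m_j`, `j ≠ i`, invariance gives `B ⁅x, y⁆ v = -B y ⁅x, v⁆ = 0`,
because `⁅x, v⁆ ∈ h` and `y ∈ m`; also `a + u ⊥ N`. Hence `n ∈ N` is orthogonal to itself,
so `n = 0` since `B` is positive definite. -/

open LinearMap (BilinForm)

namespace LinearMap.BilinForm

theorem isCompl_orthogonal_of_anisotropic_s2 {K V : Type*} [Field K] [AddCommGroup V] [Module K V]
    [FiniteDimensional K V] {B : BilinForm K V} (hB : B.IsRefl) {W : Submodule K V}
    (hW : ∀ w ∈ W, B w w = 0 → w = 0) : IsCompl W (B.orthogonal W) :=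
  (isCompl_orthogonal_iff_disjoint hB).2 <|
    Submodule.disjoint_def.2 fun w hw hw' => hW w hw (hw' w hw)

variable {R M : Type*} [CommRing R] [AddCommGroup M] [Module R M] (B : BilinForm R M)

theorem apply_eq_zero_of_mem_biSup {ι : Type*} {q : ι → Prop} {p : ι → Submodule R M} {w v : M}
    (hw : ∀ j, q j → ∀ u ∈ p j, B w u = 0) (hv : v ∈ ⨆ (j) (_ : q j), p j) : B w v = 0 :=
  (iSup₂_le fun j hj u hu => mem_ker.2 (hw j hj u hu) : _ ≤ ker (B w)) hv

theorem mem_of_mem_sup_of_forall_apply_eq_zero {P N : Submodule R M}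
    (hN : ∀ n ∈ N, B n n = 0 → n = 0) (hPN : ∀ p ∈ P, ∀ n ∈ N, B p n = 0) {z : M}
    (hz : z ∈ P ⊔ N) (hzN : ∀ n ∈ N, B z n = 0) : z ∈ P := by
  obtain ⟨p, hp, n, hn, rfl⟩ := Submodule.mem_sup.1 hz
  have hnn : B n n = 0 := by
    simpa only [map_add, LinearMap.add_apply, hPN p hp n hn, zero_add] using hzN n hn
  simpa only [hN n hn hnn, add_zero] using hp

end LinearMap.BilinForm

open LinearMap.BilinForm in
theorem statement_2
    {g : Type*} [LieRing g] [LieAlgebra ℝ g] [FiniteDimensional ℝ g]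
    (B : g →ₗ[ℝ] g →ₗ[ℝ] ℝ)
    (hBsymm : ∀ x y : g, B x y = B y x)
    (hBpos : ∀ x : g, x ≠ 0 → 0 < B x x)
    (hBinv : ∀ x y z : g, B ⁅z, x⁆ y + B x ⁅z, y⁆ = 0)
    (h : LieSubalgebra ℝ g)
    (m : Submodule ℝ g)
    (hm : ∀ x : g, x ∈ m ↔ ∀ y ∈ h, B x y = 0)
    (k : ℕ) (mi : Fin k → Submodule ℝ g)
    (hsup : ⨆ i, mi i = m)
    (horth : ∀ i j, i ≠ j → ∀ x ∈ mi i, ∀ y ∈ mi j, B x y = 0)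
    (hij : ∀ i j, i ≠ j → ∀ x ∈ mi i, ∀ y ∈ mi j, ⁅x, y⁆ ∈ h) :
    ∀ i, ∀ x ∈ mi i, ∀ y ∈ mi i, ⁅x, y⁆ ∈ h.toSubmodule ⊔ mi i := by
  intro i x hx y hy
  have hanis : ∀ v : g, B v v = 0 → v = 0 := fun v hv => by
    by_contra hv0
    exact (hBpos v hv0).ne' hv
  have hm_orth : m = orthogonal B h.toSubmodule := by
    ext v
    simp only [hm, mem_orthogonal_iff, LieSubalgebra.mem_toSubmodule, hBsymm v]
  have hm_split : m = mi i ⊔ ⨆ (j) (_ : j ≠ i), mi j := hsup ▸ iSup_split_single mi i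
  have hym : y ∈ m := hsup ▸ Submodule.mem_iSup_of_mem i hy
  refine mem_of_mem_sup_of_forall_apply_eq_zero B (N := ⨆ (j) (_ : j ≠ i), mi j)
    (fun n _ => hanis n) ?_ ?_ ?_
  · intro p hp n hn
    obtain ⟨a, ha, f, hf, rfl⟩ := Submodule.mem_sup.1 hp
    have hnm : n ∈ m := hm_split ▸ Submodule.mem_sup_right hn
    have hfn : B f n = 0 :=
      apply_eq_zero_of_mem_biSup B (fun j hj u hu => horth i j hj.symm f hf u hu) hn
    rw [map_add, LinearMap.add_apply, hBsymm, (hm n).1 hnm a ha, hfn, add_zero]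
  · rw [sup_assoc, ← hm_split, hm_orth,
      (isCompl_orthogonal_of_anisotropic_s2 (fun u v huv => (hBsymm v u).trans huv)
        fun w _ => hanis w).sup_eq_top]
    trivial
  · refine fun n hn => apply_eq_zero_of_mem_biSup B (fun j hj u hu => ?_) hn
    have hxu : B y ⁅x, u⁆ = 0 := (hm y).1 hym _ (hij i j hj.symm x hx u hu)
    linarith [hBinv y u x]
end

section
/- Let g be a finite-dimensional real Lie algebra with an invariant inner product, h a Lie subalgebra containing no nonzero ideal of g, m the orthogonal complement of h in g, and m = m_1 ⊕ … ⊕ m_k an orthogonal direct sum decomposition into subspaces with [h, m_i] ⊆ m_i for each i. Suppose [m_i, m_j] ⊆ h whenever i ≠ j. Then [m_i, m_j] = 0 whenever i ≠ j. -/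
/- Claim 3 in the proof of Theorem 3.5: with `B` an invariant inner product on `g`,
`h` a subalgebra containing no nonzero ideal of `g`, `m` its orthogonal complement,
and `m = m₁ ⊕ ⋯ ⊕ m_k` an orthogonal decomposition with `[h, m_i] ⊆ m_i`,
if `⁅m_i, m_j⁆ ⊆ h` for `i ≠ j` then `⁅m_i, m_j⁆ = 0` for `i ≠ j`. -/
theorem statement_3
    {g : Type*} [LieRing g] [LieAlgebra ℝ g] [FiniteDimensional ℝ g]
    (B : g →ₗ[ℝ] g →ₗ[ℝ] ℝ)
    (hBsymm : ∀ x y : g, B x y = B y x)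
    (hBpos : ∀ x : g, x ≠ 0 → 0 < B x x)
    (hBinv : ∀ x y z : g, B ⁅z, x⁆ y + B x ⁅z, y⁆ = 0)
    (h : LieSubalgebra ℝ g)
    (hnoideal : ∀ I : LieIdeal ℝ g, (∀ x ∈ I, x ∈ h) → I = ⊥)
    (m : Submodule ℝ g)
    (hm : ∀ x : g, x ∈ m ↔ ∀ y ∈ h, B x y = 0)
    (k : ℕ) (mi : Fin k → Submodule ℝ g)
    (hsup : ⨆ i, mi i = m)
    (horth : ∀ i j, i ≠ j → ∀ x ∈ mi i, ∀ y ∈ mi j, B x y = 0)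
    (hhmi : ∀ i, ∀ v ∈ h, ∀ x ∈ mi i, ⁅v, x⁆ ∈ mi i)
    (hij : ∀ i j, i ≠ j → ∀ x ∈ mi i, ∀ y ∈ mi j, ⁅x, y⁆ ∈ h) :
    ∀ i j, i ≠ j → ∀ x ∈ mi i, ∀ y ∈ mi j, ⁅x, y⁆ = 0 := by
  intro i j hij' x hx y hy
  by_contra hz
  have hzh : ⁅x, y⁆ ∈ h := hij i j hij' x hx y hy
  have hxz : ⁅x, ⁅x, y⁆⁆ ∈ mi i := by
    have := hhmi i _ hzh x hx
    have : -⁅⁅x, y⁆, x⁆ ∈ mi i := (mi i).neg_mem this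
    rwa [lie_skew] at this
  have horth' : B y ⁅x, ⁅x, y⁆⁆ = 0 :=
    hBsymm ⁅x, ⁅x, y⁆⁆ y ▸ horth i j hij' _ hxz y hy
  have hinv := hBinv y ⁅x, y⁆ x
  have : B ⁅x, y⁆ ⁅x, y⁆ = 0 := by linarith
  exact absurd this (ne_of_gt (hBpos _ hz))
end

section
/- Let g be a finite-dimensional real Lie algebra with an invariant inner product, h a Lie subalgebra containing no nonzero ideal of g, m the orthogonal complement of h in g, and m = m_1 ⊕ … ⊕ m_k an orthogonal direct sum decomposition into subspaces with [h, m_i] ⊆ m_i for each i and [m_i, m_j] = 0 whenever i ≠ j. Then each g_i := [m_i, m_i] + m_i is an ideal of g, g = g_1 ⊕ … ⊕ g_k as a direct sum of ideals, g_i ∩ m = m_i, g_i ∩ h = pr_h([m_i, m_i]), and h = (h ∩ g_1) ⊕ … ⊕ (h ∩ g_k). -/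
/- Claim 4 in the proof of Theorem 3.5: with `B` an invariant inner product on `g`,
`h` a subalgebra containing no nonzero ideal, `m` its orthogonal complement,
`prh`/`prm` the projections onto `h` and `m`, and `m = m₁ ⊕ ⋯ ⊕ m_k` an orthogonal
decomposition with `[h, m_i] ⊆ m_i` and `⁅m_i, m_j⁆ = 0` for `i ≠ j`; then the
subspaces `g_i = [m_i,m_i] + m_i` are ideals of `g`, `g = g₁ ⊕ ⋯ ⊕ g_k` is a
direct sum of ideals, `g_i ∩ m = m_i`, `g_i ∩ h = pr_h [m_i,m_i]`, and
`h = (h ∩ g₁) ⊕ ⋯ ⊕ (h ∩ g_k)`. -/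
theorem statement_4
    {g : Type*} [LieRing g] [LieAlgebra ℝ g] [FiniteDimensional ℝ g]
    (B : g →ₗ[ℝ] g →ₗ[ℝ] ℝ)
    (hBsymm : ∀ x y : g, B x y = B y x)
    (hBpos : ∀ x : g, x ≠ 0 → 0 < B x x)
    (hBinv : ∀ x y z : g, B ⁅z, x⁆ y + B x ⁅z, y⁆ = 0)
    (h : LieSubalgebra ℝ g)
    (hnoideal : ∀ I : LieIdeal ℝ g, (∀ x ∈ I, x ∈ h) → I = ⊥)
    (m : Submodule ℝ g)
    (hm : ∀ x : g, x ∈ m ↔ ∀ y ∈ h, B x y = 0)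
    (prh prm : g →ₗ[ℝ] g)
    (hprh : ∀ x : g, prh x ∈ h)
    (hprm : ∀ x : g, prm x ∈ m)
    (hpr : ∀ x : g, prh x + prm x = x)
    (k : ℕ) (mi : Fin k → Submodule ℝ g)
    (hsup : ⨆ i, mi i = m)
    (horth : ∀ i j, i ≠ j → ∀ x ∈ mi i, ∀ y ∈ mi j, B x y = 0)
    (hhmi : ∀ i, ∀ v ∈ h, ∀ x ∈ mi i, ⁅v, x⁆ ∈ mi i)
    (hzero : ∀ i j, i ≠ j → ∀ x ∈ mi i, ∀ y ∈ mi j, ⁅x, y⁆ = 0)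
    (gi : Fin k → Submodule ℝ g)
    (hgi : ∀ i, gi i =
      Submodule.span ℝ {x : g | ∃ a ∈ mi i, ∃ b ∈ mi i, ⁅a, b⁆ = x} ⊔ mi i) :
    (∀ i, ∀ x : g, ∀ y ∈ gi i, ⁅x, y⁆ ∈ gi i) ∧
    (∀ x : g, ∃! c : Fin k → g, (∀ i, c i ∈ gi i) ∧ ∑ i, c i = x) ∧
    (∀ i, gi i ⊓ m = mi i) ∧
    (∀ i, gi i ⊓ h.toSubmodule =
      Submodule.map prh
        (Submodule.span ℝ {x : g | ∃ a ∈ mi i, ∃ b ∈ mi i, ⁅a, b⁆ = x})) ∧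
    (∀ x ∈ h, ∃! c : Fin k → g,
      (∀ i, c i ∈ h ∧ c i ∈ gi i) ∧ ∑ i, c i = x) := by
  classical
  set Si : Fin k → Submodule ℝ g :=
    fun i => Submodule.span ℝ {x : g | ∃ a ∈ mi i, ∃ b ∈ mi i, ⁅a, b⁆ = x} with hSidef
  have hgi' : ∀ i, gi i = Si i ⊔ mi i := hgi
  -- basic facts
  have hB0 : ∀ x : g, B x x = 0 → x = 0 := by
    intro x hx
    by_contra h0
    exact absurd hx (ne_of_gt (hBpos x h0))
  have hhm0 : ∀ x : g, x ∈ h → x ∈ m → x = 0 := by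
    intro x hxh hxm
    exact hB0 x ((hm x).mp hxm x hxh)
  have hBhm : ∀ v ∈ h, ∀ u ∈ m, B v u = 0 := by
    intro v hv u hu
    rw [hBsymm]
    exact (hm u).mp hu v hv
  have hprh_h : ∀ x ∈ h, prh x = x := by
    intro x hx
    have h1 : prm x = x - prh x := eq_sub_of_add_eq' (hpr x)
    have h2 : prm x ∈ h := by rw [h1]; exact sub_mem hx (hprh x)
    have h3 : prm x = 0 := hhm0 _ h2 (hprm x)
    have h4 := hpr x
    rw [h3, add_zero] at h4
    exact h4
  have hprm_h : ∀ x ∈ h, prm x = 0 := by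
    intro x hx
    have h1 : prm x = x - prh x := eq_sub_of_add_eq' (hpr x)
    rw [h1, hprh_h x hx, sub_self]
  have hprm_m : ∀ x ∈ m, prm x = x := by
    intro x hx
    have h1 : prh x = x - prm x := eq_sub_of_add_eq (hpr x)
    have h2 : prh x ∈ m := by rw [h1]; exact sub_mem hx (hprm x)
    have h3 : prh x = 0 := hhm0 _ (hprh x) h2
    have h4 := hpr x
    rw [h3, zero_add] at h4
    exact h4
  have hprh_m : ∀ x ∈ m, prh x = 0 := by
    intro x hx
    have h1 : prh x = x - prm x := eq_sub_of_add_eq (hpr x)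
    rw [h1, hprm_m x hx, sub_self]
  have hmile : ∀ i, mi i ≤ m := fun i => hsup ▸ le_iSup mi i
  -- generic representation lemma
  have repr : ∀ (p : Fin k → Submodule ℝ g) (x : g), x ∈ (⨆ i, p i) →
      ∃ c : Fin k → g, (∀ i, c i ∈ p i) ∧ ∑ i, c i = x := by
    intro p x hx
    refine Submodule.iSup_induction p
      (motive := fun x => ∃ c : Fin k → g, (∀ i, c i ∈ p i) ∧ ∑ i, c i = x) hx ?_ ?_ ?_
    · intro i y hy
      refine ⟨fun j => if j = i then y else 0, ?_, ?_⟩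
      · intro j
        by_cases hji : j = i
        · subst hji; simpa using hy
        · simp [hji]
      · simp
    · exact ⟨0, fun i => zero_mem _, by simp⟩
    · rintro a b ⟨c, hc, hcs⟩ ⟨d, hd, hds⟩
      exact ⟨c + d, fun i => add_mem (hc i) (hd i),
        by simp [Finset.sum_add_distrib, hcs, hds]⟩
  -- generic uniqueness-from-orthogonality lemma
  have keyzero : ∀ (p : Fin k → Submodule ℝ g),
      (∀ i j, i ≠ j → ∀ x ∈ p i, ∀ y ∈ p j, B x y = 0) →
      ∀ c : Fin k → g, (∀ i, c i ∈ p i) → ∑ i, c i = 0 → ∀ i, c i = 0 := by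
    intro p hortho c hc hsum i
    apply hB0
    have h1 : B (c i) (∑ j, c j) = 0 := by rw [hsum]; exact map_zero _
    rw [map_sum, Finset.sum_eq_single i
      (fun b _ hb => hortho i b (Ne.symm hb) _ (hc i) _ (hc b))
      (fun habs => absurd (Finset.mem_univ i) habs)] at h1
    exact h1
  have mem_mi_of_orth : ∀ i (x : g), x ∈ m →
      (∀ j, j ≠ i → ∀ z ∈ mi j, B x z = 0) → x ∈ mi i := by
    intro i x hxm hxo
    have hx' : x ∈ ⨆ j, mi j := by rw [hsup]; exact hxm
    obtain ⟨c, hc, hcs⟩ := repr mi x hx'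
    have hcz : ∀ j, j ≠ i → c j = 0 := by
      intro j hji
      apply hB0
      have h1 : B x (c j) = 0 := hxo j hji _ (hc j)
      rw [hBsymm] at h1
      rw [← hcs, map_sum, Finset.sum_eq_single j
        (fun b _ hb => horth j b (Ne.symm hb) _ (hc j) _ (hc b))
        (fun habs => absurd (Finset.mem_univ j) habs)] at h1
      exact h1
    have hx : x = c i := by
      rw [← hcs, Finset.sum_eq_single i (fun b _ hb => hcz b hb)
        (fun habs => absurd (Finset.mem_univ i) habs)]
    rw [hx]; exact hc i
  -- prm maps [mi,mi] into mi
  have hprmS : ∀ i, ∀ s ∈ Si i, prm s ∈ mi i := by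
    intro i s hs
    have hle : Si i ≤ (mi i).comap prm := by
      apply Submodule.span_le.mpr
      rintro x ⟨a, ha, b, hb, rfl⟩
      simp only [SetLike.mem_coe, Submodule.mem_comap]
      apply mem_mi_of_orth i _ (hprm _)
      intro j hji z hz
      have h2 : ⁅a, z⁆ = 0 := hzero i j (Ne.symm hji) a ha z hz
      have h3 : B ⁅a, b⁆ z = 0 := by
        have h4 := hBinv b z a
        rw [h2] at h4
        simpa using h4
      have h4 : B (prh ⁅a, b⁆) z = 0 := hBhm _ (hprh _) z (hmile j hz)
      have h5 : B (prm ⁅a, b⁆) z = B ⁅a, b⁆ z - B (prh ⁅a, b⁆) z := by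
        have h6 := hpr ⁅a, b⁆
        nth_rewrite 2 [← h6]
        rw [map_add, LinearMap.add_apply]
        ring
      rw [h5, h3, h4, sub_zero]
    exact hle hs
  have hSile : ∀ i, Si i ≤ gi i := fun i => (hgi' i) ▸ le_sup_left
  have hmigi : ∀ i, mi i ≤ gi i := fun i => (hgi' i) ▸ le_sup_right
  have hgile : ∀ i (P : Submodule ℝ g), Si i ≤ P → mi i ≤ P → gi i ≤ P :=
    fun i P h1 h2 => le_trans (le_of_eq (hgi' i)) (sup_le h1 h2)
  -- elements of mi j kill gi i for j ≠ i
  have zero1 : ∀ i j, i ≠ j → ∀ c ∈ mi j, ∀ y ∈ gi i, ⁅c, y⁆ = 0 := by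
    intro i j hij c hc y hy
    have hker : gi i ≤ LinearMap.ker ((LieAlgebra.ad ℝ g) c) := by
      apply hgile
      · apply Submodule.span_le.mpr
        rintro x ⟨a, ha, b, hb, rfl⟩
        simp only [SetLike.mem_coe, LinearMap.mem_ker, LieAlgebra.ad_apply]
        rw [leibniz_lie, hzero j i (Ne.symm hij) c hc a ha,
          hzero j i (Ne.symm hij) c hc b hb]
        simp
      · intro x hx
        simp only [SetLike.mem_coe, LinearMap.mem_ker, LieAlgebra.ad_apply]
        exact hzero j i (Ne.symm hij) c hc x hx
    have := hker hy
    simpa [LieAlgebra.ad_apply] using this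
  -- gi i and gi j commute for i ≠ j
  have zero2 : ∀ i j, i ≠ j → ∀ x ∈ gi i, ∀ y ∈ gi j, ⁅x, y⁆ = 0 := by
    intro i j hij x hx y hy
    have hker : gi j ≤ LinearMap.ker ((LieAlgebra.ad ℝ g) x) := by
      apply hgile
      · apply Submodule.span_le.mpr
        rintro w ⟨c, hc, d, hd, rfl⟩
        simp only [SetLike.mem_coe, LinearMap.mem_ker, LieAlgebra.ad_apply]
        have h1 : ⁅x, c⁆ = 0 := by
          rw [← lie_skew, zero1 i j hij c hc x hx, neg_zero]
        have h2 : ⁅x, d⁆ = 0 := by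
          rw [← lie_skew, zero1 i j hij d hd x hx, neg_zero]
        rw [leibniz_lie, h1, h2]
        simp
      · intro u hu
        simp only [SetLike.mem_coe, LinearMap.mem_ker, LieAlgebra.ad_apply]
        rw [← lie_skew, zero1 i j hij u hu x hx, neg_zero]
    have := hker hy
    simpa [LieAlgebra.ad_apply] using this
  -- B-orthogonality of gi i and Si j
  have orth_Sg : ∀ i j, i ≠ j → ∀ x ∈ gi i, ∀ t ∈ Si j, B x t = 0 := by
    intro i j hij x hx t ht
    have hle : Si j ≤ LinearMap.ker (B x) := by
      apply Submodule.span_le.mpr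
      rintro w ⟨c, hc, d, hd, rfl⟩
      simp only [SetLike.mem_coe, LinearMap.mem_ker]
      have h1 := hBinv x d c
      rw [zero1 i j hij c hc x hx] at h1
      simpa using h1
    exact hle ht
  -- B-orthogonality of gi i and gi j
  have orth_g : ∀ i j, i ≠ j → ∀ x ∈ gi i, ∀ y ∈ gi j, B x y = 0 := by
    intro i j hij x hx y hy
    rw [hgi' j] at hy
    obtain ⟨t, ht, v, hv, rfl⟩ := Submodule.mem_sup.mp hy
    rw [map_add]
    have h1 : B x t = 0 := orth_Sg i j hij x hx t ht
    have h2 : B x v = 0 := by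
      rw [hgi' i] at hx
      obtain ⟨s, hs, u, hu, rfl⟩ := Submodule.mem_sup.mp hx
      have h3 : B u v = 0 := horth i j hij u hu v hv
      have h4 : B s v = 0 := by
        have h5 := hpr s
        have h6 : B (prh s) v = 0 := hBhm _ (hprh s) v (hmile j hv)
        have h7 : B (prm s) v = 0 := horth i j hij _ (hprmS i s hs) v hv
        calc B s v = B (prh s + prm s) v := by rw [h5]
          _ = 0 := by rw [map_add, LinearMap.add_apply, h6, h7, add_zero]
      rw [map_add, LinearMap.add_apply, h4, h3, add_zero]
    rw [h1, h2, add_zero]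
  -- Claim 1: each gi is an ideal
  have claim1 : ∀ i, ∀ x : g, ∀ y ∈ gi i, ⁅x, y⁆ ∈ gi i := by
    intro i
    have ha : ∀ v ∈ h, ∀ y ∈ gi i, ⁅v, y⁆ ∈ gi i := by
      intro v hv y hy
      have hle : gi i ≤ (gi i).comap ((LieAlgebra.ad ℝ g) v) := by
        apply hgile
        · apply Submodule.span_le.mpr
          rintro x ⟨a, ha', b, hb, rfl⟩
          simp only [SetLike.mem_coe, Submodule.mem_comap, LieAlgebra.ad_apply]
          rw [leibniz_lie]
          refine add_mem (hSile i ?_) (hSile i ?_)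
          · exact Submodule.subset_span ⟨⁅v, a⁆, hhmi i v hv a ha', b, hb, rfl⟩
          · exact Submodule.subset_span ⟨a, ha', ⁅v, b⁆, hhmi i v hv b hb, rfl⟩
        · intro x hx
          simp only [SetLike.mem_coe, Submodule.mem_comap, LieAlgebra.ad_apply]
          exact hmigi i (hhmi i v hv x hx)
      have := hle hy
      simpa [LieAlgebra.ad_apply] using this
    have hmm : ∀ u ∈ mi i, ∀ y ∈ gi i, ⁅u, y⁆ ∈ gi i := by
      intro u hu y hy
      have hle : gi i ≤ (gi i).comap ((LieAlgebra.ad ℝ g) u) := by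
        apply hgile
        · apply Submodule.span_le.mpr
          rintro x ⟨a, ha', b, hb, rfl⟩
          simp only [SetLike.mem_coe, Submodule.mem_comap, LieAlgebra.ad_apply]
          have h5 := hpr ⁅a, b⁆
          rw [← h5, lie_add]
          refine add_mem ?_ ?_
          · rw [← lie_skew]
            exact neg_mem (hmigi i (hhmi i _ (hprh _) u hu))
          · refine hSile i (Submodule.subset_span ⟨u, hu, prm ⁅a, b⁆, ?_, rfl⟩)
            exact hprmS i _ (Submodule.subset_span ⟨a, ha', b, hb, rfl⟩)
        · intro z hz
          simp only [SetLike.mem_coe, Submodule.mem_comap, LieAlgebra.ad_apply]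
          exact hSile i (Submodule.subset_span ⟨u, hu, z, hz, rfl⟩)
      have := hle hy
      simpa [LieAlgebra.ad_apply] using this
    have hbm : ∀ u ∈ m, ∀ y ∈ gi i, ⁅u, y⁆ ∈ gi i := by
      intro u hu y hy
      have hu' : u ∈ ⨆ j, mi j := by rw [hsup]; exact hu
      refine Submodule.iSup_induction mi (motive := fun u => ⁅u, y⁆ ∈ gi i) hu' ?_ ?_ ?_
      · intro j x hx
        by_cases hji : j = i
        · subst hji; exact hmm x hx y hy
        · rw [zero1 i j (Ne.symm hji) x hx y hy]; exact zero_mem _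
      · show ⁅(0 : g), y⁆ ∈ gi i
        rw [zero_lie]; exact zero_mem _
      · intro a b hab hbb
        show ⁅a + b, y⁆ ∈ gi i
        rw [add_lie]; exact add_mem hab hbb
    intro x y hy
    rw [← hpr x, add_lie]
    exact add_mem (ha _ (hprh x) y hy) (hbm _ (hprm x) y hy)
  -- the sum of the gi is an ideal whose orthogonal complement is an ideal inside h
  have hSclosed : ∀ z : g, ∀ y ∈ (⨆ i, gi i), ⁅z, y⁆ ∈ (⨆ i, gi i) := by
    intro z y hy
    refine Submodule.iSup_induction gi (motive := fun y => ⁅z, y⁆ ∈ ⨆ i, gi i) hy ?_ ?_ ?_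
    · intro i x hx
      exact Submodule.mem_iSup_of_mem i (claim1 i z x hx)
    · show ⁅z, (0 : g)⁆ ∈ ⨆ i, gi i
      rw [lie_zero]; exact zero_mem _
    · intro a b hab hbb
      show ⁅z, a + b⁆ ∈ ⨆ i, gi i
      rw [lie_add]; exact add_mem hab hbb
  have hmleS : m ≤ ⨆ i, gi i := by
    rw [← hsup]
    exact iSup_le fun i => le_trans (hmigi i) (le_iSup gi i)
  let N0 : Submodule ℝ g :=
    { carrier := {x | ∀ y ∈ (⨆ i, gi i), B y x = 0}
      add_mem' := fun {a b} ha hb y hy => by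
        rw [map_add, ha y hy, hb y hy, add_zero]
      zero_mem' := fun y hy => map_zero (B y)
      smul_mem' := fun c x hx y hy => by
        rw [map_smul, hx y hy, smul_zero] }
  let N : LieIdeal ℝ g :=
    { N0 with
      lie_mem := by
        intro x n hn
        intro y hy
        have h1 := hBinv y n x
        have h2 : B ⁅x, y⁆ n = 0 := hn ⁅x, y⁆ (hSclosed x y hy)
        rw [h2, zero_add] at h1
        exact h1 }
  have hNh : ∀ x ∈ N, x ∈ h := by
    intro x hx
    have hx0 : ∀ y ∈ (⨆ i, gi i), B y x = 0 := hx
    have h1 : B (prm x) x = 0 := hx0 (prm x) (hmleS (hprm x))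
    have h2 : B (prm x) (prh x) = 0 := by
      rw [hBsymm]
      exact hBhm _ (hprh x) _ (hprm x)
    have h3 : B (prm x) (prm x) = 0 := by
      have h5 := hpr x
      nth_rewrite 2 [← h5] at h1
      rw [map_add, h2, zero_add] at h1
      exact h1
    have h4 : prm x = 0 := hB0 _ h3
    have h5 := hpr x
    rw [h4, add_zero] at h5
    rw [← h5]
    exact hprh x
  have hNbot : N = ⊥ := hnoideal N hNh
  have horthS : LinearMap.BilinForm.orthogonal B (⨆ i, gi i) = ⊥ := by
    rw [eq_bot_iff]
    intro x hx
    have hxN : x ∈ N := by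
      intro y hy
      exact hx y hy
    rw [hNbot] at hxN
    simpa using hxN
  have hrefl : LinearMap.IsRefl B := fun x y hxy => by rw [hBsymm]; exact hxy
  have hfr := LinearMap.BilinForm.finrank_add_finrank_orthogonal hrefl (⨆ i, gi i)
  have hinf : (⨆ i, gi i) ⊓ LinearMap.BilinForm.orthogonal B ⊤ = ⊥ := by
    rw [eq_bot_iff]
    intro x hx
    have h2 : x ∈ LinearMap.BilinForm.orthogonal B (⨆ i, gi i) :=
      LinearMap.BilinForm.orthogonal_le le_top hx.2
    rw [horthS] at h2
    exact h2
  rw [horthS, hinf] at hfr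
  simp only [finrank_bot, add_zero] at hfr
  have hStop : (⨆ i, gi i) = ⊤ := Submodule.eq_top_of_finrank_eq hfr
  -- Claim 2
  have claim2 : ∀ x : g, ∃! c : Fin k → g, (∀ i, c i ∈ gi i) ∧ ∑ i, c i = x := by
    intro x
    obtain ⟨c, hc, hcs⟩ := repr gi x (by rw [hStop]; trivial)
    refine ⟨c, ⟨hc, hcs⟩, ?_⟩
    rintro c' ⟨hc', hcs'⟩
    have hz : ∀ i, c' i - c i = 0 :=
      keyzero gi orth_g (fun i => c' i - c i)
        (fun i => sub_mem (hc' i) (hc i))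
        (by rw [Finset.sum_sub_distrib, hcs', hcs, sub_self])
    funext i
    exact sub_eq_zero.mp (hz i)
  -- Claim 3
  have claim3 : ∀ i, gi i ⊓ m = mi i := by
    intro i
    apply le_antisymm
    · rintro x ⟨hx1, hx2⟩
      rw [hgi' i] at hx1
      obtain ⟨s, hs, u, hu, rfl⟩ := Submodule.mem_sup.mp hx1
      have h1 : prm (s + u) = s + u := hprm_m _ hx2
      have h2 : prm (s + u) = prm s + prm u := map_add _ _ _
      have h3 : prm u = u := hprm_m u (hmile i hu)
      have h4 : s + u = prm s + u := by rw [← h1, h2, h3]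
      rw [h4]
      exact add_mem (hprmS i s hs) hu
    · exact le_inf (hmigi i) (hmile i)
  -- Claim 4
  have claim4 : ∀ i, gi i ⊓ h.toSubmodule = Submodule.map prh (Si i) := by
    intro i
    apply le_antisymm
    · rintro x ⟨hx1, hx2⟩
      rw [hgi' i] at hx1
      obtain ⟨s, hs, u, hu, rfl⟩ := Submodule.mem_sup.mp hx1
      have hxh : s + u ∈ h := hx2
      have h1 : prh (s + u) = s + u := hprh_h _ hxh
      have h2 : prh u = 0 := hprh_m u (hmile i hu)
      have h3 : prh (s + u) = prh s + prh u := map_add _ _ _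
      rw [h1, h2, add_zero] at h3
      exact Submodule.mem_map.mpr ⟨s, hs, h3.symm⟩
    · rintro x ⟨s, hs, rfl⟩
      constructor
      · have h1 : prh s = s - prm s := eq_sub_of_add_eq (hpr s)
        rw [h1]
        exact sub_mem (hSile i hs) (hmigi i (hprmS i s hs))
      · exact hprh s
  -- Claim 5
  have claim5 : ∀ x ∈ h, ∃! c : Fin k → g,
      (∀ i, c i ∈ h ∧ c i ∈ gi i) ∧ ∑ i, c i = x := by
    intro x hxh
    obtain ⟨c, ⟨hc, hcs⟩, huniq⟩ := claim2 x
    have hpm : ∀ i, prm (c i) ∈ mi i := by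
      intro i
      have hci := hc i
      rw [hgi' i] at hci
      obtain ⟨s, hs, u, hu, hsu⟩ := Submodule.mem_sup.mp hci
      have h1 : prm (c i) = prm s + u := by
        rw [← hsu, map_add, hprm_m u (hmile i hu)]
      rw [h1]
      exact add_mem (hprmS i s hs) hu
    have hz : ∀ i, prm (c i) = 0 := by
      apply keyzero mi horth (fun i => prm (c i)) hpm
      rw [← map_sum, hcs, hprm_h x hxh]
    have hch : ∀ i, c i ∈ h := by
      intro i
      have h1 := hpr (c i)
      rw [hz i, add_zero] at h1
      rw [← h1]
      exact hprh (c i)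
    refine ⟨c, ⟨fun i => ⟨hch i, hc i⟩, hcs⟩, ?_⟩
    intro c' hc'
    exact huniq c' ⟨fun i => (hc'.1 i).2, hc'.2⟩
  exact ⟨claim1, claim2, claim3, claim4, claim5⟩
end

section
/- Let K be a compact topological group with Haar probability measure, V a finite-dimensional real inner product space, and ρ : K → GL(V) a continuous representation preserving the inner product. Let u ∈ V with ρ(g)u = u for all g ∈ K, let V^K = {v ∈ V : ρ(g)v = v for all g ∈ K} be the fixed subspace, and let f : V → ℝ be a K-invariant function (f(ρ(g)y) = f(y) for all g ∈ K, y ∈ V) that is differentiable at u. Then the derivative of f at u vanishes on the orthogonal complement of V^K: for every w ∈ V with w ⊥ V^K, Df(u)(w) = 0. -/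
/- The averaging argument in the proof of Theorem 4.3: `K` is a compact topological
group (hence carries a Haar probability measure), `V` a finite-dimensional real
inner product space, `ρ : K → GL(V)` a continuous representation preserving the
inner product, `u` a fixed point of `ρ`, and `f : V → ℝ` a `K`-invariant function
differentiable at `u`.  Then the derivative of `f` at `u` vanishes on the orthogonal
complement of the fixed subspace `V^K`. -/
theorem statement_5
    {K : Type*} [Group K] [TopologicalSpace K] [IsTopologicalGroup K] [CompactSpace K]
    {V : Type*} [NormedAddCommGroup V] [InnerProductSpace ℝ V] [FiniteDimensional ℝ V]
    (ρ : K → V →L[ℝ] V)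
    (hρone : ρ 1 = ContinuousLinearMap.id ℝ V)
    (hρmul : ∀ g₁ g₂ : K, ρ (g₁ * g₂) = (ρ g₁).comp (ρ g₂))
    (hρcont : Continuous fun p : K × V => ρ p.1 p.2)
    (hρinner : ∀ (gk : K) (x y : V), (inner ℝ (ρ gk x) (ρ gk y) : ℝ) = inner ℝ x y)
    (u : V) (hu : ∀ gk : K, ρ gk u = u)
    (f : V → ℝ)
    (hfinv : ∀ (gk : K) (y : V), f (ρ gk y) = f y)
    (hfdiff : DifferentiableAt ℝ f u) :
    ∀ w : V, (∀ v : V, (∀ gk : K, ρ gk v = v) → (inner ℝ w v : ℝ) = 0) →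
      fderiv ℝ f u w = 0 := by
  intro w hw
  -- ρ g (ρ g⁻¹ y) = y
  have hsurj : ∀ (g : K) (y : V), ρ g (ρ g⁻¹ y) = y := by
    intro g y
    have := congrArg (fun T : V →L[ℝ] V => T y) ((hρmul g g⁻¹).symm.trans (by
      rw [mul_inv_cancel, hρone]))
    simpa using this
  -- chain rule: D (ρ g x) = D x
  have hD : ∀ (g : K) (x : V), fderiv ℝ f u (ρ g x) = fderiv ℝ f u x := by
    intro g x
    have hcomp : f ∘ (ρ g) = f := funext (hfinv g)
    have h1 : fderiv ℝ (f ∘ ρ g) u = (fderiv ℝ f (ρ g u)).comp (ρ g) := by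
      rw [fderiv_comp u (by rw [hu g]; exact hfdiff) ((ρ g).differentiableAt),
        (ρ g).fderiv]
    rw [hcomp, hu g] at h1
    exact DFunLike.congr_fun h1.symm x
  -- Riesz representative
  set z := (InnerProductSpace.toDual ℝ V).symm (fderiv ℝ f u) with hz
  have hrep : ∀ x : V, fderiv ℝ f u x = (inner ℝ z x : ℝ) := by
    intro x
    have := (InnerProductSpace.toDual ℝ V).apply_symm_apply (fderiv ℝ f u)
    rw [← this]
    rfl
  -- z is fixed
  have hzfix : ∀ g : K, ρ g z = z := by
    intro g
    have key : ∀ y : V, (inner ℝ (ρ g z - z) y : ℝ) = 0 := by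
      intro y
      have h1 : (inner ℝ (ρ g z) y : ℝ) = inner ℝ z (ρ g⁻¹ y) := by
        conv_lhs => rw [← hsurj g y]
        exact hρinner g z (ρ g⁻¹ y)
      have h2 : (inner ℝ z (ρ g⁻¹ y) : ℝ) = inner ℝ z y := by
        rw [← hrep, ← hrep, hD]
      rw [inner_sub_left, h1, h2, sub_self]
    have := key (ρ g z - z)
    rw [inner_self_eq_zero] at this
    exact sub_eq_zero.mp this
  rw [hrep, real_inner_comm]
  exact hw z hzfix
end

section
/- Let V be a finite-dimensional real inner product space of dimension at least 2, and let ψ : V \ {0} → ℝ be a smooth function that is positively 0-homogeneous, i.e., ψ(λy) = ψ(y) for all λ > 0 and y ≠ 0. Then there exists ε₀ > 0 such that for every ε with 0 < ε < ε₀, the function F : V → ℝ defined by F(y) = ‖y‖(1 + εψ(y)) for y ≠ 0 and F(0) = 0 is a Minkowski norm: F is positive and smooth on V \ {0}, F(λy) = λF(y) for all λ ≥ 0, and for each y ≠ 0 the symmetric bilinear form (u,v) ↦ ½ ∂²/∂s∂t|_{s=t=0} F²(y + su + tv) is positive definite. -/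
open scoped RealInnerProductSpace

theorem aux_unit
    {V : Type*} [NormedAddCommGroup V] [InnerProductSpace ℝ V]
    (ψ : V → ℝ) (hψ : ContDiffOn ℝ (⊤ : ℕ∞) ψ {(0 : V)}ᶜ)
    (ε M₀ M₁ M₂ : ℝ) (yh uh : V) (hy : ‖yh‖ = 1) (hu : ‖uh‖ = 1)
    (hε : 0 < ε)
    (hM0 : |ψ yh| ≤ M₀)
    (hM1 : |fderiv ℝ ψ yh uh| ≤ M₁)
    (hM2 : |fderiv ℝ (fderiv ℝ ψ) yh uh uh| ≤ M₂)
    (hc0 : ε * M₀ ≤ 1 / 2)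
    (hc1 : ε * (12 * M₁ + 3 * M₂) ≤ 1 / 4) :
    ∃ D : ℝ → ℝ,
      (∀ r ∈ Set.Ioo (-1 : ℝ) 1,
        HasDerivAt (fun r : ℝ => ‖yh + r • uh‖ ^ 2 * (1 + ε * ψ (yh + r • uh)) ^ 2) (D r) r) ∧
      ∃ A : ℝ, HasDerivAt D A 0 ∧ (1 / 4 : ℝ) ≤ A := by
  set c : ℝ → V := fun r => yh + r • uh with hc
  have hcne : ∀ r ∈ Set.Ioo (-1 : ℝ) 1, c r ≠ 0 := by
    intro r hr h0
    have h1 : yh = -(r • uh) := eq_neg_of_add_eq_zero_left h0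
    have h2 : (1 : ℝ) = |r| := by
      have := congrArg norm h1
      simpa [hy, hu, norm_smul, Real.norm_eq_abs] using this
    have : |r| < 1 := abs_lt.mpr ⟨hr.1, hr.2⟩
    linarith [h2 ▸ this]
  have hcd : ∀ r : ℝ, HasDerivAt c uh r := by
    intro r
    have := ((hasDerivAt_id' r).smul_const uh).const_add yh
    simp only [one_smul] at this
    exact this
  -- derivative of r ↦ ψ (c r) on Ioo
  set Φ : V → ℝ := fun v => fderiv ℝ ψ v uh with hΦ
  have hψat : ∀ r ∈ Set.Ioo (-1 : ℝ) 1, ContDiffAt ℝ (⊤ : ℕ∞) ψ (c r) := fun r hr =>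
    hψ.contDiffAt (isOpen_compl_singleton.mem_nhds (hcne r hr))
  have hp : ∀ r ∈ Set.Ioo (-1 : ℝ) 1, HasDerivAt (fun r => ψ (c r)) (Φ (c r)) r := by
    intro r hr
    exact ((hψat r hr).differentiableAt (by simp)).hasFDerivAt.comp_hasDerivAt r (hcd r)
  -- t, h, w
  set t : ℝ := (inner ℝ yh uh : ℝ) with ht
  have hh : ∀ r : ℝ, HasDerivAt (fun r : ℝ => ‖yh + r • uh‖ ^ 2) (2 * t + 2 * r) r := by
    intro r
    have heq : (fun r : ℝ => ‖yh + r • uh‖ ^ 2) = fun r : ℝ => 1 + 2 * (r * t) + r ^ 2 := by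
      funext r
      rw [norm_add_sq_real, real_inner_smul_right, norm_smul, hy, hu]
      simp [Real.norm_eq_abs, sq_abs, mul_comm, ht]
    rw [heq]
    have : HasDerivAt (fun r : ℝ => 1 + 2 * (r * t) + r ^ 2)
        (0 + 2 * (1 * t) + 2 * r ^ 1) r := by
      exact (((hasDerivAt_const r (1:ℝ)).add (((hasDerivAt_id r).mul_const t).const_mul 2))).add
        (hasDerivAt_pow 2 r)
    convert this using 1; push_cast; ring
  have hw : ∀ r ∈ Set.Ioo (-1 : ℝ) 1,
      HasDerivAt (fun r => 1 + ε * ψ (c r)) (ε * Φ (c r)) r := by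
    intro r hr
    exact ((hp r hr).const_mul ε).const_add 1
  refine ⟨fun r => (2 * t + 2 * r) * (1 + ε * ψ (c r)) ^ 2 +
      ‖yh + r • uh‖ ^ 2 * (2 * (1 + ε * ψ (c r)) * (ε * Φ (c r))), ?_, ?_⟩
  · intro r hr
    have h2 : HasDerivAt (fun r => (1 + ε * ψ (c r)) ^ 2)
        (2 * (1 + ε * ψ (c r)) ^ 1 * (ε * Φ (c r))) r := (hw r hr).pow 2
    have := (hh r).mul h2
    exact this.congr_deriv (by ring)
  · -- second derivative at 0
    have h00 : (0:ℝ) ∈ Set.Ioo (-1 : ℝ) 1 := by norm_num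
    have hc00 : c 0 = yh := by simp [hc]
    -- derivative of Φ ∘ c at 0
    set Ψ : ℝ := fderiv ℝ (fderiv ℝ ψ) yh uh uh with hΨ
    have hψ'd : DifferentiableAt ℝ (fderiv ℝ ψ) yh := by
      have : ContDiffAt ℝ 1 (fderiv ℝ ψ) yh := by
        refine ContDiffAt.fderiv_right (n := ((⊤ : ℕ∞) : WithTop ℕ∞)) ?_ (WithTop.coe_le_coe.mpr le_top)
        simpa [hc00] using hψat 0 h00
      exact this.differentiableAt one_ne_zero
    have hΦc : HasDerivAt (fun r => Φ (c r)) Ψ 0 := by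
      have happ : HasFDerivAt Φ
          ((ContinuousLinearMap.apply ℝ ℝ uh).comp (fderiv ℝ (fderiv ℝ ψ) yh)) yh := by
        exact (ContinuousLinearMap.apply ℝ ℝ uh).hasFDerivAt.comp yh hψ'd.hasFDerivAt
      have happ' : HasFDerivAt Φ
          ((ContinuousLinearMap.apply ℝ ℝ uh).comp (fderiv ℝ (fderiv ℝ ψ) yh)) (c 0) := by
        rw [hc00]; exact happ
      have := happ'.comp_hasDerivAt 0 (hcd 0)
      simp [hc00, hΨ] at this
      exact this
    set w₀ : ℝ := 1 + ε * ψ yh with hw₀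
    set e : ℝ := ε * Φ yh with he
    refine ⟨2 * w₀ ^ 2 + 8 * t * w₀ * e + 2 * e ^ 2 + 2 * w₀ * (ε * Ψ), ?_, ?_⟩
    · have h1 : HasDerivAt (fun r : ℝ => 2 * t + 2 * r) 2 0 := by
        simpa using ((hasDerivAt_id (0:ℝ)).const_mul 2).const_add (2 * t)
      have hw0 := hw 0 h00
      have hw2 := hw0.pow 2
      have hh0 := hh 0
      have hlast := (hw0.const_mul 2).mul (hΦc.const_mul ε)
      have htot := (h1.mul hw2).add (hh0.mul hlast)
      refine htot.congr_deriv ?_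
      simp only [hc00, zero_smul, add_zero, hy, one_pow, pow_one, Pi.pow_apply, Pi.mul_apply,
        Nat.cast_ofNat, show (2:ℕ) - 1 = 1 from rfl]
      ring
    · -- the estimate
      have hM0' : 0 ≤ M₀ := le_trans (abs_nonneg _) hM0
      have hM1' : 0 ≤ M₁ := le_trans (abs_nonneg _) hM1
      have hM2' : 0 ≤ M₂ := le_trans (abs_nonneg _) hM2
      have ht1 : |t| ≤ 1 := by
        have := abs_real_inner_le_norm yh uh
        simpa [ht, hy, hu] using this
      have hwl : 1 / 2 ≤ w₀ := by
        have := abs_le.mp hM0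
        nlinarith
      have hwu : w₀ ≤ 3 / 2 := by
        have := abs_le.mp hM0
        nlinarith
      have heb : |e| ≤ ε * M₁ := by
        rw [he, abs_mul, abs_of_pos hε]
        exact mul_le_mul_of_nonneg_left hM1 hε.le
      have hΨb : |Ψ| ≤ M₂ := hM2
      have h8 : -(12 * (ε * M₁)) ≤ 8 * t * w₀ * e := by
        have habs : |8 * t * w₀ * e| ≤ 8 * 1 * (3/2) * (ε * M₁) := by
          rw [abs_mul, abs_mul, abs_mul]
          have h8' : |(8:ℝ)| = 8 := by norm_num
          rw [h8', abs_of_nonneg (by linarith : (0:ℝ) ≤ w₀)]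
          gcongr
        have := neg_abs_le (8 * t * w₀ * e)
        linarith
      have hlast : -(3 * (ε * M₂)) ≤ 2 * w₀ * (ε * Ψ) := by
        have habs : |2 * w₀ * (ε * Ψ)| ≤ 2 * (3/2) * (ε * M₂) := by
          rw [abs_mul, abs_mul, abs_mul, abs_of_pos hε]
          have h2' : |(2:ℝ)| = 2 := by norm_num
          rw [h2', abs_of_nonneg (by linarith : (0:ℝ) ≤ w₀)]
          gcongr
        have := neg_abs_le (2 * w₀ * (ε * Ψ))
        linarith
      have hsq : 1 / 2 ≤ 2 * w₀ ^ 2 := by nlinarith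
      have he2 : 0 ≤ 2 * e ^ 2 := by positivity
      have hc1' : 12 * (ε * M₁) + 3 * (ε * M₂) ≤ 1 / 4 := by linarith only [hc1]
      clear_value t Ψ w₀ e
      linarith only [h8, hlast, hsq, he2, hc1']

/- The construction of a perturbed Minkowski norm in the proof of Theorem 4.3:
`V` is a finite-dimensional real inner product space of dimension at least 2 and
`ψ : V \ {0} → ℝ` is smooth and positively 0-homogeneous.  Then for all
sufficiently small `ε > 0` the function `F y = ‖y‖ (1 + ε ψ(y))` (with `F 0 = 0`)
is a Minkowski norm: positive and smooth away from `0`, positively 1-homogeneous,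
with positive definite fundamental tensor at every nonzero point. -/
theorem statement_6
    {V : Type*} [NormedAddCommGroup V] [InnerProductSpace ℝ V] [FiniteDimensional ℝ V]
    (hdim : 2 ≤ Module.finrank ℝ V)
    (ψ : V → ℝ)
    (hψsmooth : ContDiffOn ℝ (⊤ : ℕ∞) ψ {(0 : V)}ᶜ)
    (hψhom : ∀ c : ℝ, 0 < c → ∀ y : V, y ≠ 0 → ψ (c • y) = ψ y) :
    ∃ ε₀ : ℝ, 0 < ε₀ ∧ ∀ ε : ℝ, 0 < ε → ε < ε₀ →
      ∀ F : V → ℝ, (∀ y : V, F y = ‖y‖ * (1 + ε * ψ y)) →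
        (∀ y : V, y ≠ 0 → 0 < F y) ∧
        ContDiffOn ℝ (⊤ : ℕ∞) F {(0 : V)}ᶜ ∧
        (∀ c : ℝ, 0 ≤ c → ∀ y : V, F (c • y) = c * F y) ∧
        (∀ y : V, y ≠ 0 → ∀ u : V, u ≠ 0 →
          0 < (1 / 2 : ℝ) *
            deriv (fun s : ℝ =>
              deriv (fun t : ℝ => (F (y + s • u + t • u)) ^ 2) 0) 0) := by
  classical
  set S : Set V := Metric.sphere (0 : V) 1 with hS
  have hSsub : S ⊆ {(0 : V)}ᶜ := by
    intro x hx
    have hx1 : ‖x‖ = 1 := by simpa [hS] using hx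
    simp only [Set.mem_compl_iff, Set.mem_singleton_iff]
    intro h; rw [h, norm_zero] at hx1; norm_num at hx1
  have hScomp : IsCompact S := isCompact_sphere 0 1
  -- bounds for ψ and its first two derivatives on the unit sphere
  obtain ⟨C₀, hC₀⟩ := hScomp.exists_bound_of_continuousOn (hψsmooth.continuousOn.mono hSsub)
  have hψ'cont : ContinuousOn (fderiv ℝ ψ) {(0 : V)}ᶜ :=
    hψsmooth.continuousOn_fderiv_of_isOpen isOpen_compl_singleton (by simp)
  obtain ⟨C₁, hC₁⟩ := hScomp.exists_bound_of_continuousOn (hψ'cont.mono hSsub)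
  have hψ'smooth : ContDiffOn ℝ 1 (fderiv ℝ ψ) {(0 : V)}ᶜ :=
    hψsmooth.fderiv_of_isOpen isOpen_compl_singleton (WithTop.coe_le_coe.mpr le_top)
  have hψ''cont : ContinuousOn (fderiv ℝ (fderiv ℝ ψ)) {(0 : V)}ᶜ :=
    hψ'smooth.continuousOn_fderiv_of_isOpen isOpen_compl_singleton le_rfl
  obtain ⟨C₂, hC₂⟩ := hScomp.exists_bound_of_continuousOn (E := V →L[ℝ] V →L[ℝ] ℝ) (hψ''cont.mono hSsub)
  set M₀ : ℝ := max C₀ 0 with hM₀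
  set M₁ : ℝ := max C₁ 0 with hM₁
  set M₂ : ℝ := max C₂ 0 with hM₂
  have hM₀0 : 0 ≤ M₀ := le_max_right _ _
  have hM₁0 : 0 ≤ M₁ := le_max_right _ _
  have hM₂0 : 0 ≤ M₂ := le_max_right _ _
  -- normalized vectors are on the sphere
  have hnorm : ∀ y : V, y ≠ 0 → (‖y‖⁻¹ • y ∈ S ∧ ‖(‖y‖⁻¹ • y)‖ = 1) := by
    intro y hy
    have ha : (0:ℝ) < ‖y‖ := norm_pos_iff.mpr hy
    have h1 : ‖(‖y‖⁻¹ • y)‖ = 1 := by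
      rw [norm_smul, Real.norm_eq_abs, abs_of_pos (inv_pos.mpr ha), inv_mul_cancel₀ ha.ne']
    exact ⟨by simpa [hS] using h1, h1⟩
  have hψbound : ∀ y : V, y ≠ 0 → |ψ y| ≤ M₀ := by
    intro y hy
    have ha : (0:ℝ) < ‖y‖ := norm_pos_iff.mpr hy
    obtain ⟨hyS, -⟩ := hnorm y hy
    have hyne : ‖y‖⁻¹ • y ≠ 0 := hSsub hyS
    have hid : ψ y = ψ (‖y‖⁻¹ • y) := by
      have := hψhom ‖y‖ ha (‖y‖⁻¹ • y) hyne
      rw [smul_inv_smul₀ ha.ne'] at this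
      exact this
    rw [hid]
    exact le_trans (by simpa using hC₀ _ hyS) (le_max_left _ _)
  refine ⟨min (1 / (2 * (M₀ + 1))) (1 / (4 * (12 * M₁ + 3 * M₂ + 1))), ?_, ?_⟩
  · exact lt_min (by positivity) (by positivity)
  intro ε hε hεlt F hF
  have hε0 : ε * M₀ ≤ 1 / 2 := by
    have h1 : ε < 1 / (2 * (M₀ + 1)) := lt_of_lt_of_le hεlt (min_le_left _ _)
    have h2 : (0:ℝ) < 2 * (M₀ + 1) := by linarith
    have h3 : ε * (2 * (M₀ + 1)) < 1 := (lt_div_iff₀ h2).mp h1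
    nlinarith
  have hε1 : ε * (12 * M₁ + 3 * M₂) ≤ 1 / 4 := by
    have h1 : ε < 1 / (4 * (12 * M₁ + 3 * M₂ + 1)) := lt_of_lt_of_le hεlt (min_le_right _ _)
    have h2 : (0:ℝ) < 4 * (12 * M₁ + 3 * M₂ + 1) := by linarith
    have h3 : ε * (4 * (12 * M₁ + 3 * M₂ + 1)) < 1 := (lt_div_iff₀ h2).mp h1
    nlinarith
  have hFeq : F = fun y => ‖y‖ * (1 + ε * ψ y) := funext hF
  -- positivity
  have hpos : ∀ y : V, y ≠ 0 → 0 < F y := by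
    intro y hy
    rw [hF]
    have ha : (0:ℝ) < ‖y‖ := norm_pos_iff.mpr hy
    have hb := abs_le.mp (hψbound y hy)
    have : (0:ℝ) < 1 + ε * ψ y := by nlinarith
    exact mul_pos ha this
  -- homogeneity
  have hFhom : ∀ c : ℝ, 0 ≤ c → ∀ y : V, F (c • y) = c * F y := by
    intro co hco y
    rcases hco.eq_or_lt with h | h
    · rw [← h]; simp [hF]
    · rcases eq_or_ne y 0 with rfl | hy
      · simp [hF]
      · rw [hF, hF, norm_smul, hψhom co h y hy, Real.norm_eq_abs, abs_of_pos h]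
        ring
  refine ⟨hpos, ?_, hFhom, ?_⟩
  · -- smoothness
    rw [hFeq]
    intro x hx
    have hx' : x ≠ 0 := by simpa [Set.mem_compl_iff] using hx
    exact ((contDiffAt_norm ℝ hx').mul (contDiffAt_const.add
      (contDiffAt_const.mul (hψsmooth.contDiffAt
        (isOpen_compl_singleton.mem_nhds hx))))).contDiffWithinAt
  · -- positive definiteness along a direction
    intro y hy u hu
    have ha : (0:ℝ) < ‖y‖ := norm_pos_iff.mpr hy
    have hb : (0:ℝ) < ‖u‖ := norm_pos_iff.mpr hu
    set a : ℝ := ‖y‖ with haa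
    set b : ℝ := ‖u‖ with hbb
    set yh : V := a⁻¹ • y with hyh
    set uh : V := b⁻¹ • u with huh
    obtain ⟨hyS, hy1⟩ := hnorm y hy
    obtain ⟨huS, hu1⟩ := hnorm u hu
    set k : ℝ := b / a with hk
    have hkpos : (0:ℝ) < k := div_pos hb ha
    -- bounds at yh
    have hB0 : |ψ yh| ≤ M₀ := hψbound yh (hSsub hyS)
    have hB1 : |fderiv ℝ ψ yh uh| ≤ M₁ := by
      have h1 : ‖fderiv ℝ ψ yh uh‖ ≤ ‖fderiv ℝ ψ yh‖ * ‖uh‖ :=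
        (fderiv ℝ ψ yh).le_opNorm uh
      rw [hu1, mul_one] at h1
      calc |fderiv ℝ ψ yh uh| ≤ ‖fderiv ℝ ψ yh‖ := h1
        _ ≤ C₁ := hC₁ _ hyS
        _ ≤ M₁ := le_max_left _ _
    have hB2 : |fderiv ℝ (fderiv ℝ ψ) yh uh uh| ≤ M₂ := by
      have h1 : ‖fderiv ℝ (fderiv ℝ ψ) yh uh uh‖ ≤ ‖fderiv ℝ (fderiv ℝ ψ) yh uh‖ * ‖uh‖ :=
        (fderiv ℝ (fderiv ℝ ψ) yh uh).le_opNorm uh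
      have h2 : ‖fderiv ℝ (fderiv ℝ ψ) yh uh‖ ≤ ‖fderiv ℝ (fderiv ℝ ψ) yh‖ * ‖uh‖ :=
        (fderiv ℝ (fderiv ℝ ψ) yh).le_opNorm uh
      rw [hu1, mul_one] at h1 h2
      calc |fderiv ℝ (fderiv ℝ ψ) yh uh uh| ≤ ‖fderiv ℝ (fderiv ℝ ψ) yh uh‖ := h1
        _ ≤ ‖fderiv ℝ (fderiv ℝ ψ) yh‖ := h2
        _ ≤ C₂ := hC₂ _ hyS
        _ ≤ M₂ := le_max_left _ _
    obtain ⟨D, hD, A, hDA, hA⟩ := aux_unit ψ hψsmooth ε M₀ M₁ M₂ yh uh hy1 hu1 hε hB0 hB1 hB2 hε0 hε1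
    set Gh : ℝ → ℝ := fun r => ‖yh + r • uh‖ ^ 2 * (1 + ε * ψ (yh + r • uh)) ^ 2 with hGh
    set G : ℝ → ℝ := fun r => a ^ 2 * Gh (k * r) with hG
    -- F (y + r u) ^ 2 = G r
    have hkey : ∀ r : ℝ, F (y + r • u) ^ 2 = G r := by
      intro r
      have hvec : y + r • u = a • (yh + (k * r) • uh) := by
        rw [smul_add, smul_inv_smul₀ ha.ne', smul_smul, smul_smul]
        congr 2
        rw [hk]
        field_simp
      rw [hvec, hFhom a ha.le, mul_pow, hF, mul_pow, hG]
    -- inner function rewriting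
    have hinner : ∀ s : ℝ, (fun t : ℝ => (F (y + s • u + t • u)) ^ 2) = fun t : ℝ => G (s + t) := by
      intro s
      funext t
      rw [add_assoc, ← add_smul]
      exact hkey (s + t)
    have houter : (fun s : ℝ => deriv (fun t : ℝ => (F (y + s • u + t • u)) ^ 2) 0)
        = deriv G := by
      funext s
      rw [hinner s, deriv_comp_const_add G s 0, add_zero]
    rw [houter]
    -- derivative of G near 0
    have hmul : ∀ r : ℝ, HasDerivAt (fun x : ℝ => k * x) (k * 1) r := fun r =>
      (hasDerivAt_id r).const_mul k
    have hGderiv : ∀ r ∈ Set.Ioo (-(1/k)) (1/k),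
        HasDerivAt G (a ^ 2 * (D (k * r) * (k * 1))) r := by
      intro r hr
      have hmem : k * r ∈ Set.Ioo (-1 : ℝ) 1 := by
        have h1 : |r| < 1 / k := abs_lt.mpr ⟨by linarith [hr.1], hr.2⟩
        have h2 : |k * r| < 1 := by
          rw [abs_mul, abs_of_pos hkpos]
          calc k * |r| < k * (1 / k) := by exact mul_lt_mul_of_pos_left h1 hkpos
            _ = 1 := by field_simp
        exact ⟨(abs_lt.mp h2).1, (abs_lt.mp h2).2⟩
      exact ((hD (k * r) hmem).comp r (hmul r)).const_mul (a ^ 2)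
    have hev : deriv G =ᶠ[nhds 0] fun r => a ^ 2 * (D (k * r) * (k * 1)) := by
      have hδ : (0:ℝ) < 1 / k := one_div_pos.mpr hkpos
      refine Filter.eventuallyEq_of_mem (Ioo_mem_nhds (neg_lt_zero.mpr hδ) hδ) ?_
      intro r hr
      exact (hGderiv r hr).deriv
    rw [hev.deriv_eq]
    have hDA' : HasDerivAt D A (k * 0) := by simpa using hDA
    have hfin : HasDerivAt (fun r => a ^ 2 * (D (k * r) * (k * 1)))
        (a ^ 2 * ((A * (k * 1)) * (k * 1))) 0 :=
      (((hDA'.comp 0 (hmul 0)).mul_const (k * 1)).const_mul (a ^ 2))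
    rw [hfin.deriv]
    have hApos : (0:ℝ) < A := lt_of_lt_of_le (by norm_num) hA
    have hk1 : (0:ℝ) < k * 1 := by simpa using hkpos
    have := mul_pos (pow_pos ha 2) (mul_pos (mul_pos hApos hk1) hk1)
    linarith
end

section
/- Let g be a finite-dimensional real Lie algebra with an invariant inner product, h a Lie subalgebra, and m the orthogonal complement of h in g. Suppose u ∈ m satisfies pr_m([w,u]) ∈ [h,u] for all w ∈ m. Then dim c_g(u) ≥ dim g − 2 dim h, where c_g(u) = {x ∈ g : [x,u] = 0}. -/
/-! The equigeodesic condition forces `[g, u] ⊆ h + [h, u]`: split `x = a + w` with `a ∈ h`,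
`w ∈ m`; then `⁅a, u⁆ ∈ [h, u]`, while `⁅w, u⁆ = pr_h ⁅w, u⁆ + pr_m ⁅w, u⁆ ∈ h + [h, u]`.
Hence `dim g - dim c_g(u) = dim [g, u] ≤ 2 dim h` by rank–nullity for `x ↦ ⁅x, u⁆`. -/

open Module

theorem LinearMap.finrank_range_le_of_range_le_sup_map {K V W : Type*} [DivisionRing K]
    [AddCommGroup V] [Module K V] [FiniteDimensional K V]
    [AddCommGroup W] [Module K W] [FiniteDimensional K W]
    (f : V →ₗ[K] W) (H : Submodule K V) (E : Submodule K W) (hf : range f ≤ E ⊔ H.map f) :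
    finrank K (range f) ≤ finrank K E + finrank K H :=
  calc finrank K (range f) ≤ finrank K ↥(E ⊔ H.map f) := Submodule.finrank_mono hf
    _ ≤ finrank K E + finrank K (H.map f) := Submodule.finrank_add_le_finrank_add_finrank _ _
    _ ≤ finrank K E + finrank K H := Nat.add_le_add_left (Submodule.finrank_map_le _ _) _

theorem LieSubalgebra.lie_mem_sup_map_lie {R L : Type*} [CommRing R] [LieRing L]
    [LieAlgebra R L] (h : LieSubalgebra R L) (m : Submodule R L) (prh prm : L → L)
    (hprh : ∀ x, prh x ∈ h) (hprm : ∀ x, prm x ∈ m) (hpr : ∀ x, prh x + prm x = x) (u : L)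
    (hequi : ∀ w ∈ m, ∃ v ∈ h, ⁅v, u⁆ = prm ⁅w, u⁆) (x : L) :
    ⁅x, u⁆ ∈ h.toSubmodule ⊔
      h.toSubmodule.map ((LieModule.toEnd R L L : L →ₗ[R] Module.End R L).flip u) := by
  obtain ⟨v, hv, hvu⟩ := hequi (prm x) (hprm x)
  have hsplit : ⁅x, u⁆ = prh ⁅prm x, u⁆ + (⁅prh x, u⁆ + ⁅v, u⁆) := by
    conv_lhs => rw [← hpr x, add_lie, ← hpr ⁅prm x, u⁆, ← hvu]
    abel
  rw [hsplit]
  exact Submodule.add_mem _ (Submodule.mem_sup_left (hprh _)) <| Submodule.mem_sup_right <|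
    Submodule.add_mem _ ⟨prh x, hprh x, rfl⟩ ⟨v, hv, rfl⟩

theorem statement_8_general
    {g : Type*} [LieRing g] [LieAlgebra ℝ g] [FiniteDimensional ℝ g]
    (h : LieSubalgebra ℝ g)
    (m : Submodule ℝ g)
    (prh prm : g →ₗ[ℝ] g)
    (hprh : ∀ x : g, prh x ∈ h)
    (hprm : ∀ x : g, prm x ∈ m)
    (hpr : ∀ x : g, prh x + prm x = x)
    (u : g)
    (hequi : ∀ w ∈ m, ∃ v ∈ h, ⁅v, u⁆ = prm ⁅w, u⁆)
    (c : Submodule ℝ g)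
    (hc : ∀ x : g, x ∈ c ↔ ⁅x, u⁆ = 0) :
    (Module.finrank ℝ g : ℤ) - 2 * (Module.finrank ℝ h : ℤ) ≤
      (Module.finrank ℝ c : ℤ) := by
  set f := (LieModule.toEnd ℝ g g : g →ₗ[ℝ] Module.End ℝ g).flip u
  have hker : LinearMap.ker f = c := by
    ext x
    simp [f, hc]
  have hrange : finrank ℝ (LinearMap.range f) ≤ finrank ℝ h + finrank ℝ h :=
    f.finrank_range_le_of_range_le_sup_map h.toSubmodule h.toSubmodule <| by
      rintro _ ⟨x, rfl⟩
      exact h.lie_mem_sup_map_lie m prh prm hprh hprm hpr u hequi x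
  have hrankNullity := f.finrank_range_add_finrank_ker
  rw [hker] at hrankNullity
  omega

theorem statement_8
    {g : Type*} [LieRing g] [LieAlgebra ℝ g] [FiniteDimensional ℝ g]
    (B : g →ₗ[ℝ] g →ₗ[ℝ] ℝ)
    (hBsymm : ∀ x y : g, B x y = B y x)
    (hBpos : ∀ x : g, x ≠ 0 → 0 < B x x)
    (hBinv : ∀ x y z : g, B ⁅z, x⁆ y + B x ⁅z, y⁆ = 0)
    (h : LieSubalgebra ℝ g)
    (m : Submodule ℝ g)
    (hm : ∀ x : g, x ∈ m ↔ ∀ y ∈ h, B x y = 0)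
    (prh prm : g →ₗ[ℝ] g)
    (hprh : ∀ x : g, prh x ∈ h)
    (hprm : ∀ x : g, prm x ∈ m)
    (hpr : ∀ x : g, prh x + prm x = x)
    (u : g) (hu : u ∈ m)
    (hequi : ∀ w ∈ m, ∃ v ∈ h, ⁅v, u⁆ = prm ⁅w, u⁆)
    (c : Submodule ℝ g)
    (hc : ∀ x : g, x ∈ c ↔ ⁅x, u⁆ = 0) :
    (Module.finrank ℝ g : ℤ) - 2 * (Module.finrank ℝ h : ℤ) ≤
      (Module.finrank ℝ c : ℤ) :=
  statement_8_general h m prh prm hprh hprm hpr u hequi c hc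
end

section
/- Let g be a finite-dimensional real Lie algebra, h a Lie subalgebra, and g = h ⊕ m a vector space direct sum with [h,m] ⊆ m; write pr_h and pr_m for the projections. Suppose u ∈ m satisfies pr_m([w,u]) ∈ [h,u] for all w ∈ m. Then the image of the centralizer c_g(u) = {x ∈ g : [x,u] = 0} under pr_m equals the kernel of the linear map l : m → h given by l(w) = pr_h([w,u]); that is, pr_m(c_g(u)) = {w ∈ m : pr_h([w,u]) = 0}. -/
/- The key claim in the proof of part (1) of Lemma 5.2: `g = h ⊕ m` is a vector
space direct sum with `h` a subalgebra and `[h, m] ⊆ m`, with projections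
`prh`/`prm`.  If `u ∈ m` satisfies `pr_m ⁅w, u⁆ ∈ ⁅h, u⁆` for all `w ∈ m`, then
the image of the centralizer `c_g(u)` under `pr_m` equals the kernel of
`l : m → h`, `l w = pr_h ⁅w, u⁆`. -/
theorem statement_9
    {g : Type*} [LieRing g] [LieAlgebra ℝ g] [FiniteDimensional ℝ g]
    (h : LieSubalgebra ℝ g)
    (m : Submodule ℝ g)
    (hdisj : h.toSubmodule ⊓ m = ⊥)
    (prh prm : g →ₗ[ℝ] g)
    (hprh : ∀ x : g, prh x ∈ h)
    (hprm : ∀ x : g, prm x ∈ m)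
    (hpr : ∀ x : g, prh x + prm x = x)
    (hbr : ∀ v ∈ h, ∀ x ∈ m, ⁅v, x⁆ ∈ m)
    (u : g) (hu : u ∈ m)
    (hequi : ∀ w ∈ m, ∃ v ∈ h, ⁅v, u⁆ = prm ⁅w, u⁆) :
    ∀ w : g, (∃ x : g, ⁅x, u⁆ = 0 ∧ prm x = w) ↔ (w ∈ m ∧ prh ⁅w, u⁆ = 0) := by
  -- For x ∈ m, prh x = 0 and prm x = x; for v ∈ h, prm v = 0.
  have hmem : ∀ x : g, x ∈ m → prh x = 0 ∧ prm x = x := by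
    intro x hx
    have h1 : prh x ∈ h.toSubmodule ⊓ m := by
      refine ⟨hprh x, ?_⟩
      have : prh x = x - prm x := by
        have := hpr x; rw [eq_sub_iff_add_eq]; exact this  
      rw [this]; exact m.sub_mem hx (hprm x)
    have h2 : prh x = 0 := by rw [hdisj] at h1; simpa using h1
    refine ⟨h2, ?_⟩
    have := hpr x; rw [h2] at this; simpa using this
  have hhmem : ∀ v : g, v ∈ h → prm v = 0 := by
    intro v hv
    have h1 : prm v ∈ h.toSubmodule ⊓ m := by
      refine ⟨?_, hprm v⟩
      have : prm v = v - prh v := by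
        have := hpr v; rw [eq_sub_iff_add_eq]; rw [add_comm]; exact this
      rw [this]; exact h.toSubmodule.sub_mem hv (hprh v)
    rw [hdisj] at h1; simpa using h1
  intro w
  constructor
  · rintro ⟨x, hx0, rfl⟩
    refine ⟨hprm x, ?_⟩
    have hs : prh x + prm x = x := hpr x
    have hb : ⁅prm x, u⁆ = -⁅prh x, u⁆ := by
      have : ⁅prh x + prm x, u⁆ = 0 := by rw [hs, hx0]
      rw [add_lie] at this; exact eq_neg_of_add_eq_zero_right this
    have hbm : ⁅prm x, u⁆ ∈ m := by
      rw [hb]; exact m.neg_mem (hbr _ (hprh x) _ hu)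
    exact (hmem _ hbm).1
  · rintro ⟨hw, hw0⟩
    obtain ⟨v, hv, hvu⟩ := hequi w hw
    have hbrw : ⁅w, u⁆ = prm ⁅w, u⁆ := by
      have := hpr ⁅w, u⁆; rw [hw0] at this; simpa using this.symm
    refine ⟨w - v, ?_, ?_⟩
    · rw [sub_lie, hvu, ← hbrw, sub_self]
    · rw [map_sub, (hmem _ hw).2, hhmem _ hv, sub_zero]
end

section
/- Let g be a finite-dimensional real Lie algebra, h a Lie subalgebra, and g = h ⊕ m a vector space direct sum with [h,m] ⊆ m; write pr_h and pr_m for the projections. Suppose u ∈ m satisfies pr_m([w,u]) ∈ [h,u] for all w ∈ m. Then dim c_g(u) = dim c_h(u) + dim {w ∈ m : pr_h([w,u]) = 0}, where c_g(u) = {x ∈ g : [x,u] = 0} and c_h(u) = {v ∈ h : [v,u] = 0}. -/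
/- Equation (035) in the proof of part (1) of Lemma 5.2: `g = h ⊕ m` is a vector
space direct sum with `h` a subalgebra and `[h, m] ⊆ m`, with projections
`prh`/`prm`.  If `u ∈ m` satisfies `pr_m ⁅w, u⁆ ∈ ⁅h, u⁆` for all `w ∈ m`, then
`dim c_g(u) = dim c_h(u) + dim {w ∈ m : pr_h ⁅w, u⁆ = 0}`. -/
theorem statement_10
    {g : Type*} [LieRing g] [LieAlgebra ℝ g] [FiniteDimensional ℝ g]
    (h : LieSubalgebra ℝ g)
    (m : Submodule ℝ g)
    (hdisj : h.toSubmodule ⊓ m = ⊥)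
    (prh prm : g →ₗ[ℝ] g)
    (hprh : ∀ x : g, prh x ∈ h)
    (hprm : ∀ x : g, prm x ∈ m)
    (hpr : ∀ x : g, prh x + prm x = x)
    (hbr : ∀ v ∈ h, ∀ x ∈ m, ⁅v, x⁆ ∈ m)
    (u : g) (hu : u ∈ m)
    (hequi : ∀ w ∈ m, ∃ v ∈ h, ⁅v, u⁆ = prm ⁅w, u⁆)
    (c : Submodule ℝ g) (hc : ∀ x : g, x ∈ c ↔ ⁅x, u⁆ = 0)
    (ch : Submodule ℝ g) (hch : ∀ x : g, x ∈ ch ↔ (x ∈ h ∧ ⁅x, u⁆ = 0))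
    (kl : Submodule ℝ g) (hkl : ∀ x : g, x ∈ kl ↔ (x ∈ m ∧ prh ⁅x, u⁆ = 0)) :
    Module.finrank ℝ c = Module.finrank ℝ ch + Module.finrank ℝ kl := by

  -- basic projection facts
  have hdisj' : ∀ x : g, x ∈ h → x ∈ m → x = 0 := by
    intro x hxh hxm
    have : x ∈ h.toSubmodule ⊓ m := ⟨hxh, hxm⟩
    rw [hdisj] at this; simpa using this
  have prh0 : ∀ x ∈ m, prh x = 0 := by
    intro x hx
    have hmem : prh x ∈ m := by
      have : prh x = x - prm x := eq_sub_of_add_eq (hpr x)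
      rw [this]; exact Submodule.sub_mem m hx (hprm x)
    exact hdisj' _ (hprh x) hmem
  have prm0 : ∀ x ∈ h, prm x = 0 := by
    intro x hx
    have hmem : prm x ∈ h := by
      have : prm x = x - prh x := eq_sub_of_add_eq' (hpr x)
      rw [this]; exact Submodule.sub_mem h.toSubmodule hx (hprh x)
    exact hdisj' _ hmem (hprm x)
  have prmid : ∀ x ∈ m, prm x = x := by
    intro x hx
    have := hpr x
    rw [prh0 x hx] at this; simpa using this
  set f : c →ₗ[ℝ] g := prm ∘ₗ c.subtype with hf
  have hker : (LinearMap.ker f).map c.subtype = ch := by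
    ext x
    constructor
    · rintro ⟨⟨y, hy⟩, hyk, rfl⟩
      have hy0 : prm y = 0 := hyk
      have hyh : y ∈ h := by
        have : y = prh y := by have := hpr y; rw [hy0] at this; simpa using this.symm
        rw [this]; exact hprh y
      exact (hch y).2 ⟨hyh, (hc y).1 hy⟩
    · intro hx
      obtain ⟨hxh, hxu⟩ := (hch x).1 hx
      refine ⟨⟨x, (hc x).2 hxu⟩, ?_, rfl⟩
      show prm x = 0
      exact prm0 x hxh
  have hrange : LinearMap.range f = kl := by
    ext y
    constructor
    · rintro ⟨⟨x, hx⟩, rfl⟩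
      have hxu : ⁅x, u⁆ = 0 := (hc x).1 hx
      refine (hkl (prm x)).2 ⟨hprm x, ?_⟩
      have hbm : ⁅prm x, u⁆ ∈ m := by
        have h1 : ⁅prm x, u⁆ = -⁅prh x, u⁆ := by
          have : ⁅prh x + prm x, u⁆ = ⁅x, u⁆ := by rw [hpr x]
          rw [add_lie, hxu] at this
          exact eq_neg_of_add_eq_zero_right this
        rw [h1]
        exact Submodule.neg_mem m (hbr (prh x) (hprh x) u hu)
      exact prh0 _ hbm
    · intro hy
      obtain ⟨hym, hyp⟩ := (hkl y).1 hy
      obtain ⟨v, hvh, hvu⟩ := hequi y hym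
      have hyu : prm ⁅y, u⁆ = ⁅y, u⁆ := by
        have := hpr ⁅y, u⁆
        rw [hyp] at this; simpa using this
      have hxc : y - v ∈ c := by
        rw [hc]
        rw [sub_lie, hvu, hyu, sub_self]
      refine ⟨⟨y - v, hxc⟩, ?_⟩
      show prm (y - v) = y
      rw [map_sub, prmid y hym, prm0 v hvh, sub_zero]
  have hrn := LinearMap.finrank_range_add_finrank_ker f
  rw [hrange] at hrn
  have hkf : Module.finrank ℝ (LinearMap.ker f) = Module.finrank ℝ ch := by
    rw [← hker, Submodule.finrank_map_subtype_eq]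
  omega
end

section
/- Let g be a finite-dimensional real semisimple Lie algebra with negative-definite Killing form, equipped with an invariant inner product, let h be a Lie subalgebra and m the orthogonal complement of h in g. Suppose there exists a subset U ⊆ m \ {0}, open and dense in m and closed under multiplication by positive scalars, such that pr_m([w,u]) ∈ [h,u] for every u ∈ U and w ∈ m. Then for every u ∈ m, dim c_g(u) ≥ dim g − 2 dim h, where c_g(u) = {x ∈ g : [x,u] = 0}. -/
open Module

/-- Gram determinant criterion for linear dependence w.r.t. a positive-definite
bilinear form. -/
private lemma gram_det_eq_zero_iff {g : Type*} [AddCommGroup g] [Module ℝ g]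
    (B : g →ₗ[ℝ] g →ₗ[ℝ] ℝ) (hBpos : ∀ x : g, x ≠ 0 → 0 < B x x)
    {n : ℕ} (v : Fin n → g) :
    (Matrix.of fun i j => B (v i) (v j)).det = 0 ↔ ¬ LinearIndependent ℝ v := by
  classical
  constructor
  · intro hdet
    obtain ⟨c, hc0, hc⟩ := Matrix.exists_mulVec_eq_zero_iff.2 hdet
    have hrow : ∀ i, B (v i) (∑ j, c j • v j) = 0 := by
      intro i
      have := congrFun hc i
      simpa [Matrix.mulVec, dotProduct, map_sum, map_smul, smul_eq_mul,
        mul_comm] using this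
    have hww : B (∑ i, c i • v i) (∑ j, c j • v j) = 0 := by
      have hB1 : B (∑ i, c i • v i) = ∑ i, c i • B (v i) := by
        rw [map_sum]; simp only [map_smul]
      rw [hB1, LinearMap.sum_apply]
      refine Finset.sum_eq_zero fun i _ => ?_
      rw [LinearMap.smul_apply, hrow i, smul_zero]
    have hw0 : (∑ i, c i • v i) = 0 := by
      by_contra hne
      exact absurd hww (ne_of_gt (hBpos _ hne))
    refine Fintype.not_linearIndependent_iff.2 ⟨c, hw0, ?_⟩
    obtain ⟨i, hi⟩ := Function.ne_iff.1 hc0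
    exact ⟨i, hi⟩
  · intro hdep
    obtain ⟨c, hsum, i, hci⟩ := Fintype.not_linearIndependent_iff.1 hdep
    refine Matrix.exists_mulVec_eq_zero_iff.1 ⟨c, ?_, ?_⟩
    · exact fun hh => hci (by rw [hh]; rfl)
    · funext j
      have : B (v j) (∑ k, c k • v k) = 0 := by rw [hsum]; simp
      simpa [Matrix.mulVec, dotProduct, map_sum, map_smul, smul_eq_mul,
        mul_comm] using this

theorem statement_11
    {g : Type*} [LieRing g] [LieAlgebra ℝ g] [FiniteDimensional ℝ g]
    [LieAlgebra.IsSemisimple ℝ g]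
    [TopologicalSpace g] [IsTopologicalAddGroup g] [ContinuousSMul ℝ g]
    (hkilling : ∀ x : g, x ≠ 0 → killingForm ℝ g x x < 0)
    (B : g →ₗ[ℝ] g →ₗ[ℝ] ℝ)
    (hBsymm : ∀ x y : g, B x y = B y x)
    (hBpos : ∀ x : g, x ≠ 0 → 0 < B x x)
    (hBinv : ∀ x y z : g, B ⁅z, x⁆ y + B x ⁅z, y⁆ = 0)
    (h : LieSubalgebra ℝ g)
    (m : Submodule ℝ g)
    (hm : ∀ x : g, x ∈ m ↔ ∀ y ∈ h, B x y = 0)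
    (prh prm : g →ₗ[ℝ] g)
    (hprh : ∀ x : g, prh x ∈ h)
    (hprm : ∀ x : g, prm x ∈ m)
    (hpr : ∀ x : g, prh x + prm x = x)
    (U : Set g)
    (hUsub : U ⊆ {x : g | x ∈ m ∧ x ≠ 0})
    (hUopen : IsOpen {x : m | (x : g) ∈ U})
    (hUdense : Dense {x : m | (x : g) ∈ U})
    (hUcone : ∀ c : ℝ, 0 < c → ∀ x ∈ U, c • x ∈ U)
    (hequi : ∀ u ∈ U, ∀ w ∈ m, ∃ v ∈ h, ⁅v, u⁆ = prm ⁅w, u⁆)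
    (cg : g → Submodule ℝ g)
    (hcg : ∀ (v x : g), x ∈ cg v ↔ ⁅x, v⁆ = 0) :
    ∀ u ∈ m, (Module.finrank ℝ g : ℤ) - 2 * (Module.finrank ℝ h : ℤ) ≤
      (Module.finrank ℝ (cg u) : ℤ) := by
  classical
  intro u hu
  set r := 2 * finrank ℝ h with hr
  -- the centralizer is the kernel of `ad`
  have hadker : ∀ z : g, cg z = LinearMap.ker (LieAlgebra.ad ℝ g z) := by
    intro z
    ext x
    rw [hcg, LinearMap.mem_ker, LieAlgebra.ad_apply]
    constructor
    · intro hx; rw [← lie_skew, hx, neg_zero]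
    · intro hx; rw [← lie_skew, hx, neg_zero]
  -- Step A: the rank bound on the conic set U
  have key : ∀ z ∈ U, finrank ℝ (LinearMap.range (LieAlgebra.ad ℝ g z)) ≤ r := by
    intro z hz
    have hle : LinearMap.range (LieAlgebra.ad ℝ g z) ≤
        h.toSubmodule ⊔ Submodule.map (LieAlgebra.ad ℝ g z) h.toSubmodule := by
      rintro _ ⟨x, rfl⟩
      obtain ⟨v, hv, hveq⟩ := hequi z hz (prm x) (hprm x)
      have h1 : ⁅prm x, z⁆ = prh ⁅prm x, z⁆ + ⁅v, z⁆ := by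
        rw [hveq]; exact (hpr _).symm
      have h2 : LieAlgebra.ad ℝ g z x
          = LieAlgebra.ad ℝ g z (prh x) + LieAlgebra.ad ℝ g z v
            + (-(prh ⁅prm x, z⁆)) := by
        simp only [LieAlgebra.ad_apply]
        have hxx : ⁅z, x⁆ = ⁅z, prh x⁆ + ⁅z, prm x⁆ := by
          conv_lhs => rw [← hpr x]
          rw [lie_add]
        rw [hxx]
        have e1 : ⁅z, prm x⁆ = -⁅prm x, z⁆ := by rw [← lie_skew]
        have e2 : ⁅z, v⁆ = -⁅v, z⁆ := by rw [← lie_skew]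
        have : ⁅z, prm x⁆ = -(prh ⁅prm x, z⁆) + ⁅z, v⁆ := by
          rw [e1, e2]
          nth_rewrite 1 [h1]
          abel
        rw [this]
        abel
      rw [h2]
      refine Submodule.add_mem _ (Submodule.add_mem _ ?_ ?_) ?_
      · exact Submodule.mem_sup_right ⟨prh x, hprh x, rfl⟩
      · exact Submodule.mem_sup_right ⟨v, hv, rfl⟩
      · exact Submodule.mem_sup_left (Submodule.neg_mem _ (hprh _))
    calc finrank ℝ (LinearMap.range (LieAlgebra.ad ℝ g z))
        ≤ finrank ℝ ↥(h.toSubmodule ⊔ Submodule.map (LieAlgebra.ad ℝ g z) h.toSubmodule) :=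
          Submodule.finrank_mono hle
      _ ≤ finrank ℝ h.toSubmodule
            + finrank ℝ ↥(Submodule.map (LieAlgebra.ad ℝ g z) h.toSubmodule) :=
          Submodule.finrank_add_le_finrank_add_finrank _ _
      _ ≤ finrank ℝ h.toSubmodule + finrank ℝ h.toSubmodule :=
          Nat.add_le_add_left (Submodule.finrank_map_le _ _) _
      _ = r := by
          have hfr : finrank ℝ h.toSubmodule = finrank ℝ h := rfl
          rw [hfr, hr]; omega
  -- Step B: extend to all of m by a one-variable polynomial argument
  suffices hrange : finrank ℝ (LinearMap.range (LieAlgebra.ad ℝ g u)) ≤ r by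
    have hrn := LinearMap.finrank_range_add_finrank_ker (LieAlgebra.ad ℝ g u)
    rw [hadker u]
    omega
  by_contra hcon
  push_neg at hcon
  obtain ⟨y, hy⟩ := exists_linearIndependent_of_le_finrank (R := ℝ)
    (M := ↥(LinearMap.range (LieAlgebra.ad ℝ g u))) (n := r + 1) hcon
  have hyg : LinearIndependent ℝ (fun i => (y i : g)) :=
    hy.map' (LinearMap.range (LieAlgebra.ad ℝ g u)).subtype
      (Submodule.ker_subtype _)
  choose x hx using fun i => LinearMap.mem_range.1 (y i).2
  -- a point of U
  obtain ⟨u0m, hu0U⟩ := hUdense.nonempty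
  set u0 : g := (u0m : g) with hu0
  set d : g := u - u0 with hd
  set p : Fin (r + 1) → g := fun i => ⁅u0, x i⁆ with hp
  set q : Fin (r + 1) → g := fun i => ⁅d, x i⁆ with hq
  -- the line through u0 in direction d, inside m
  set dm : m := ⟨u, hu⟩ - u0m with hdm
  set c : ℝ → m := fun t => u0m + t • dm with hcdef
  have hc : Continuous c := by
    exact continuous_const.add (continuous_id.smul continuous_const)
  set I : Set ℝ := c ⁻¹' {x : m | (x : g) ∈ U} with hI
  have hIopen : IsOpen I := hUopen.preimage hc
  have h0I : (0 : ℝ) ∈ I := by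
    simp only [hI, Set.mem_preimage, hcdef, zero_smul, add_zero, Set.mem_setOf_eq]
    exact hu0U
  have hIinf : I.Infinite := by
    obtain ⟨ε, hε, hball⟩ := Metric.isOpen_iff.1 hIopen 0 h0I
    have : Set.Ioo (0 - ε) (0 + ε) ⊆ I := by
      rw [← Real.ball_eq_Ioo]; exact hball
    exact (Set.Ioo_infinite (by linarith)).mono this
  have hct : ∀ t : ℝ, ((c t : g)) = u0 + t • d := by
    intro t
    rw [hcdef]
    simp only [Submodule.coe_add, SetLike.val_smul, hdm, AddSubgroupClass.coe_sub]
    rfl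
  -- the Gram polynomial
  set P : Matrix (Fin (r + 1)) (Fin (r + 1)) (Polynomial ℝ) :=
    Matrix.of fun i j =>
      Polynomial.C (B (p i) (p j))
        + (Polynomial.C (B (p i) (q j)) + Polynomial.C (B (q i) (p j))) * Polynomial.X
        + Polynomial.C (B (q i) (q j)) * Polynomial.X ^ 2 with hP
  have heval : ∀ t : ℝ, (P.det).eval t
      = (Matrix.of fun i j => B (p i + t • q i) (p j + t • q j)).det := by
    intro t
    have hmap := RingHom.map_det (Polynomial.evalRingHom t) P
    have hentry : ((Polynomial.evalRingHom t).mapMatrix P)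
        = Matrix.of fun i j => B (p i + t • q i) (p j + t • q j) := by
      ext i j
      rw [hP]
      simp only [RingHom.mapMatrix_apply, Matrix.map_apply, Matrix.of_apply,
        Polynomial.coe_evalRingHom, Polynomial.eval_add, Polynomial.eval_mul,
        Polynomial.eval_pow, Polynomial.eval_C, Polynomial.eval_X,
        map_add, map_smul, LinearMap.add_apply, LinearMap.smul_apply, smul_eq_mul]
      ring
    rw [show Polynomial.eval t P.det = (Polynomial.evalRingHom t) P.det from rfl, hmap,
      hentry]
  -- the family at parameter t
  have hfam : ∀ t : ℝ, ∀ i, p i + t • q i = LieAlgebra.ad ℝ g (u0 + t • d) (x i) := by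
    intro t i
    rw [LieAlgebra.ad_apply, add_lie, smul_lie]
  -- roots: every t in I is a root of P.det
  have hroot : ∀ t ∈ I, (P.det).IsRoot t := by
    intro t ht
    have htU : (u0 + t • d) ∈ U := by
      have := ht
      simp only [hI, Set.mem_preimage, Set.mem_setOf_eq] at this
      rwa [hct t] at this
    have hdep : ¬ LinearIndependent ℝ (fun i => p i + t • q i) := by
      intro hind
      have hind' : LinearIndependent ℝ
          (fun i => (⟨LieAlgebra.ad ℝ g (u0 + t • d) (x i),
            LinearMap.mem_range_self _ _⟩ :
            ↥(LinearMap.range (LieAlgebra.ad ℝ g (u0 + t • d))))) := by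
        apply LinearIndependent.of_comp
          (LinearMap.range (LieAlgebra.ad ℝ g (u0 + t • d))).subtype
        convert hind using 1
        funext i
        exact (hfam t i).symm
        rfl
      have hcard := hind'.fintype_card_le_finrank
      rw [Fintype.card_fin] at hcard
      have := key _ htU
      omega
    have := (gram_det_eq_zero_iff B hBpos (fun i => p i + t • q i)).2 hdep
    rw [Polynomial.IsRoot, heval t]
    exact this
  have hP0 : P.det = 0 :=
    Polynomial.eq_zero_of_infinite_isRoot _ (hIinf.mono hroot)
  -- evaluate at t = 1
  have h1 : (Matrix.of fun i j =>
      B (p i + (1 : ℝ) • q i) (p j + (1 : ℝ) • q j)).det = 0 := by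
    rw [← heval 1, hP0]
    simp
  have hdep1 := (gram_det_eq_zero_iff B hBpos (fun i => p i + (1 : ℝ) • q i)).1 h1
  apply hdep1
  have : (fun i => p i + (1 : ℝ) • q i) = fun i => (y i : g) := by
    funext i
    rw [hfam 1 i]
    have : u0 + (1 : ℝ) • d = u := by rw [one_smul, hd]; abel
    rw [this, hx]
  rw [this]
  exact hyg
end
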